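/- arXiv:2506.09285 — 10 statements merged into one kernel-verified Lean document; each statement's English description precedes it below -/
import Mathlib

section
/- Let R and A be rings such that A is a left R-module, let n ≥ 1, and equip the matrix ring M_n(A) with the entrywise left R-module structure. If M_n(A) is Dixmier with respect to R, then A is Dixmier with respect to R; likewise, if M_n(A) is weakly Dixmier with respect to R, then A is weakly Dixmier with respect to R. -/
/-!
An `R`-linear ring endomorphism `φ` of `A` induces the entrywise `R`-linear ring endomorphism
`φ.mapMatrix` of `Mₙ(A)`, which is injective when `φ` is. Conversely, for `n ≥ 1`, `φ` is
injective (resp. surjective) as soon as `φ.mapMatrix` is: compare constant matrices, resp. read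
off a single entry of a preimage.
-/

namespace Matrix

variable {m n α β : Type*} [Nonempty m] [Nonempty n] {f : α → β}

theorem injective_of_map_injective (hf : Function.Injective fun M : Matrix m n α => M.map f) :
    Function.Injective f := by
  intro a b hab
  obtain ⟨i⟩ := ‹Nonempty m›
  obtain ⟨j⟩ := ‹Nonempty n›
  have hconst : (of fun _ _ => a : Matrix m n α).map f = (of fun _ _ => b).map f := by
    ext; simp [hab]
  exact congrFun₂ (hf hconst) i j

theorem surjective_of_map_surjective (hf : Function.Surjective fun M : Matrix m n α => M.map f) :
    Function.Surjective f := by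
  intro b
  obtain ⟨i⟩ := ‹Nonempty m›
  obtain ⟨j⟩ := ‹Nonempty n›
  obtain ⟨M, hM⟩ := hf (of fun _ _ => b)
  exact ⟨M i j, congrFun₂ hM i j⟩

theorem bijective_of_map_bijective (hf : Function.Bijective fun M : Matrix m n α => M.map f) :
    Function.Bijective f :=
  ⟨injective_of_map_injective hf.1, surjective_of_map_surjective hf.2⟩

end Matrix

/-- If the matrix ring `Mₙ(A)` (with its entrywise left `R`-module
structure) is Dixmier (resp. weakly Dixmier) with respect to `R`, then so is `A`. -/
theorem matrix_dixmier_implies_dixmier (R A : Type*) [Ring R] [Ring A] [Module R A]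
    (n : ℕ) (hn : 1 ≤ n) :
    ((∀ Φ : Matrix (Fin n) (Fin n) A →+* Matrix (Fin n) (Fin n) A,
        (∀ (r : R) (M : Matrix (Fin n) (Fin n) A), Φ (r • M) = r • Φ M) →
        Function.Bijective Φ) →
      (∀ φ : A →+* A, (∀ (r : R) (a : A), φ (r • a) = r • φ a) →
        Function.Bijective φ)) ∧
    ((∀ Φ : Matrix (Fin n) (Fin n) A →+* Matrix (Fin n) (Fin n) A,
        (∀ (r : R) (M : Matrix (Fin n) (Fin n) A), Φ (r • M) = r • Φ M) →
        Function.Injective Φ → Function.Bijective Φ) →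
      (∀ φ : A →+* A, (∀ (r : R) (a : A), φ (r • a) = r • φ a) →
        Function.Injective φ → Function.Bijective φ)) := by
  have : Nonempty (Fin n) := ⟨⟨0, hn⟩⟩
  refine ⟨fun hD φ hφ => ?_, fun hWD φ hφ hinj => ?_⟩
  · exact Matrix.bijective_of_map_bijective
      (hD φ.mapMatrix fun r => Matrix.map_smul φ r (hφ r))
  · exact Matrix.bijective_of_map_bijective
      (hWD φ.mapMatrix (fun r => Matrix.map_smul φ r (hφ r)) (Matrix.map_injective hinj))
end

section
/- Let R, A and B be rings such that A and B are left R-modules, and equip the product ring A × B with the componentwise left R-module structure. If A × B is Dixmier with respect to R, then both A and B are Dixmier with respect to R; likewise, if A × B is weakly Dixmier with respect to R, then both A and B are weakly Dixmier with respect to R. -/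
/-!
An `R`-linear ring endomorphism `φ` of `A` extends to the `R`-linear ring endomorphism
`φ × id` of `A × B`, which is injective or bijective exactly when `φ` is; symmetrically for `B`.
-/

def IsDixmier (R A : Type*) [Semiring A] [SMul R A] : Prop :=
  ∀ φ : A →+* A, (∀ (r : R) (a : A), φ (r • a) = r • φ a) → Function.Bijective φ

def IsWeaklyDixmier (R A : Type*) [Semiring A] [SMul R A] : Prop :=
  ∀ φ : A →+* A, (∀ (r : R) (a : A), φ (r • a) = r • φ a) →
    Function.Injective φ → Function.Bijective φ

section

variable {R A B : Type*} [Semiring A] [Semiring B] [SMul R A] [SMul R B]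

theorem RingHom.prodMap_map_smul {φ : A →+* A} {ψ : B →+* B}
    (hφ : ∀ (r : R) (a : A), φ (r • a) = r • φ a) (hψ : ∀ (r : R) (b : B), ψ (r • b) = r • ψ b)
    (r : R) (x : A × B) : φ.prodMap ψ (r • x) = r • φ.prodMap ψ x :=
  Prod.ext (hφ r x.1) (hψ r x.2)

theorem RingHom.bijective_prodMap_iff {φ : A →+* A} {ψ : B →+* B} :
    Function.Bijective (φ.prodMap ψ) ↔ Function.Bijective φ ∧ Function.Bijective ψ := by
  rw [coe_prodMap]
  exact Prod.map_bijective

theorem IsDixmier.of_prod_left (h : IsDixmier R (A × B)) : IsDixmier R A := fun _ hφ =>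
  (RingHom.bijective_prodMap_iff.mp (h _ (RingHom.prodMap_map_smul (ψ := RingHom.id B) hφ
    fun _ _ => rfl))).1

theorem IsDixmier.of_prod_right (h : IsDixmier R (A × B)) : IsDixmier R B := fun _ hψ =>
  (RingHom.bijective_prodMap_iff.mp (h _ (RingHom.prodMap_map_smul (φ := RingHom.id A)
    (fun _ _ => rfl) hψ))).2

theorem IsWeaklyDixmier.of_prod_left (h : IsWeaklyDixmier R (A × B)) :
    IsWeaklyDixmier R A := fun _ hφ hinj =>
  (RingHom.bijective_prodMap_iff.mp (h _ (RingHom.prodMap_map_smul (ψ := RingHom.id B) hφ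
    fun _ _ => rfl) (hinj.prodMap Function.injective_id))).1

theorem IsWeaklyDixmier.of_prod_right (h : IsWeaklyDixmier R (A × B)) :
    IsWeaklyDixmier R B := fun _ hψ hinj =>
  (RingHom.bijective_prodMap_iff.mp (h _ (RingHom.prodMap_map_smul (φ := RingHom.id A)
    (fun _ _ => rfl) hψ) (Function.injective_id.prodMap hinj))).2

end

/-- If the product ring `A × B` (with componentwise left `R`-module
structure) is Dixmier (resp. weakly Dixmier) with respect to `R`, then so are both
factors `A` and `B`. -/
theorem prod_dixmier_implies_dixmier (R A B : Type*) [Ring R] [Ring A] [Ring B]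
    [Module R A] [Module R B] :
    ((∀ Φ : A × B →+* A × B, (∀ (r : R) (x : A × B), Φ (r • x) = r • Φ x) →
        Function.Bijective Φ) →
      ((∀ φ : A →+* A, (∀ (r : R) (a : A), φ (r • a) = r • φ a) →
          Function.Bijective φ) ∧
       (∀ ψ : B →+* B, (∀ (r : R) (b : B), ψ (r • b) = r • ψ b) →
          Function.Bijective ψ))) ∧
    ((∀ Φ : A × B →+* A × B, (∀ (r : R) (x : A × B), Φ (r • x) = r • Φ x) →
        Function.Injective Φ → Function.Bijective Φ) →
      ((∀ φ : A →+* A, (∀ (r : R) (a : A), φ (r • a) = r • φ a) →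
          Function.Injective φ → Function.Bijective φ) ∧
       (∀ ψ : B →+* B, (∀ (r : R) (b : B), ψ (r • b) = r • ψ b) →
          Function.Injective ψ → Function.Bijective ψ))) :=
  ⟨fun h : IsDixmier R (A × B) => ⟨h.of_prod_left, h.of_prod_right⟩,
    fun h : IsWeaklyDixmier R (A × B) => ⟨h.of_prod_left, h.of_prod_right⟩⟩
end

section
/- Let Z be a commutative domain and let A and B be associative unital Z-algebras that are free as Z-modules, admitting a Z-basis X of A with 1_A ∈ X and a Z-basis Y of B with 1_B ∈ Y. If every Z-algebra endomorphism of the tensor product algebra A ⊗_Z B is bijective, then every Z-algebra endomorphism of A is bijective and every Z-algebra endomorphism of B is bijective. -/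
/-!
Writing `ε` for the coordinate of `1` in a basis of `B`, the map `a ⊗ b ↦ ε b • a` is a
`Z`-linear retraction of `a ↦ a ⊗ 1`, and both maps intertwine `φ` with `φ ⊗ id`. So `φ` is a
retract of the bijection `φ ⊗ id`, hence bijective. The factor `B` is handled symmetrically by
conjugating with `A ⊗ B ≃ B ⊗ A`.
-/

open scoped TensorProduct
open Function

theorem Function.Bijective.of_semiconj_retraction {α β : Type*} {i : α → β} {r : β → α}
    {f : α → α} {g : β → β} (hg : Bijective g) (hri : LeftInverse r i) (hi : Semiconj i f g)
    (hr : Semiconj r g f) : Bijective f := by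
  refine ⟨fun a a' h => hri.injective (hg.injective ?_), fun a => ?_⟩
  · rw [← hi.eq, ← hi.eq, h]
  · obtain ⟨b, hb⟩ := hg.surjective (i a)
    exact ⟨r b, by rw [← hr.eq, hb, hri]⟩

namespace Algebra.TensorProduct

variable {R A B : Type*} [CommSemiring R] [Semiring A] [Algebra R A] [Semiring B] [Algebra R B]

theorem bijective_of_bijective_rTensor (ε : B →ₗ[R] R) (hε : ε 1 = 1) (φ : A →ₐ[R] A)
    (h : Bijective (rTensor (R := R) (S := R) B φ)) : Bijective φ := by
  let r : A ⊗[R] B →ₗ[R] A := _root_.TensorProduct.rid R A ∘ₗ ε.lTensor A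
  have hr : ∀ (a : A) (b : B), r (a ⊗ₜ b) = ε b • a := fun _ _ => rfl
  refine h.of_semiconj_retraction (i := fun a => a ⊗ₜ[R] (1 : B)) (r := r)
    (fun a => by simp [hr, hε]) (fun a => by simp) (fun t => ?_)
  induction t using TensorProduct.induction_on with
  | zero => simp
  | tmul a b => simp [hr]
  | add x y hx hy => simp only [map_add, hx, hy]

theorem bijective_of_bijective_lTensor (ε : A →ₗ[R] R) (hε : ε 1 = 1) (ψ : B →ₐ[R] B)
    (h : Bijective (lTensor (R := R) (S := R) A ψ)) : Bijective ψ := by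
  refine bijective_of_bijective_rTensor ε hε ψ ?_
  rw [← EquivLike.bijective_comp (TensorProduct.comm R A B)]
  have hcomm := congrArg DFunLike.coe (comm_comp_map (AlgHom.id R A) ψ)
  simp only [AlgHom.coe_comp, AlgEquiv.coe_toAlgHom] at hcomm
  rw [← hcomm]
  exact (EquivLike.comp_bijective _ _).mpr h

end Algebra.TensorProduct

open Algebra.TensorProduct in
theorem tensor_dixmier_implies_dixmier_general (Z : Type*) [CommRing Z]
    (A B : Type*) [Ring A] [Algebra Z A] [Ring B] [Algebra Z B]
    (ιA : Type*) (XA : Module.Basis ιA Z A) (iA : ιA) (hXA : XA iA = 1)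
    (ιB : Type*) (XB : Module.Basis ιB Z B) (iB : ιB) (hXB : XB iB = 1)
    (hD : ∀ Φ : A ⊗[Z] B →ₐ[Z] A ⊗[Z] B, Function.Bijective Φ) :
    (∀ φ : A →ₐ[Z] A, Function.Bijective φ) ∧
    (∀ ψ : B →ₐ[Z] B, Function.Bijective ψ) :=
  ⟨fun φ => bijective_of_bijective_rTensor (XB.coord iB) (by simp [← hXB]) φ (hD _),
    fun ψ => bijective_of_bijective_lTensor (XA.coord iA) (by simp [← hXA]) ψ (hD _)⟩

/-- Let `Z` be a commutative domain and `A`, `B` associative unital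
`Z`-algebras that are free `Z`-modules with bases containing the respective identities.
If every `Z`-algebra endomorphism of `A ⊗[Z] B` is bijective, then every `Z`-algebra
endomorphism of `A` is bijective and every `Z`-algebra endomorphism of `B` is bijective. -/
theorem tensor_dixmier_implies_dixmier (Z : Type*) [CommRing Z] [IsDomain Z]
    (A B : Type*) [Ring A] [Algebra Z A] [Ring B] [Algebra Z B]
    (ιA : Type*) (XA : Module.Basis ιA Z A) (iA : ιA) (hXA : XA iA = 1)
    (ιB : Type*) (XB : Module.Basis ιB Z B) (iB : ιB) (hXB : XB iB = 1)
    (hD : ∀ Φ : A ⊗[Z] B →ₐ[Z] A ⊗[Z] B, Function.Bijective Φ) :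
    (∀ φ : A →ₐ[Z] A, Function.Bijective φ) ∧
    (∀ ψ : B →ₐ[Z] B, Function.Bijective ψ) :=
  tensor_dixmier_implies_dixmier_general Z A B ιA XA iA hXA ιB XB iB hXB hD
end

section
/- Let K be a field and let A and B be simple K-algebras such that the center of A equals K·1 or the center of B equals K·1. Assume that every K-algebra endomorphism of A is bijective and every K-algebra endomorphism of B is bijective. If Φ is a K-algebra endomorphism of A ⊗_K B such that Φ(A ⊗ 1) ⊆ A ⊗ 1 and Φ(1 ⊗ B) ⊆ 1 ⊗ B, then Φ is bijective. -/
open scoped TensorProduct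

/-! Φ restricts to endomorphisms φ of `A` and ψ of `B`; since `A ⊗ 1` and `1 ⊗ B` generate
`A ⊗ B`, Φ = φ ⊗ ψ, which is bijective because φ and ψ are. -/

theorem AlgHom.exists_comp_eq_of_range_le {R A B D : Type*} [CommSemiring R] [Semiring A]
    [Semiring B] [Semiring D] [Algebra R A] [Algebra R B] [Algebra R D]
    (g : A →ₐ[R] D) {j : B →ₐ[R] D} (hj : Function.Injective j) (h : g.range ≤ j.range) :
    ∃ φ : A →ₐ[R] B, j.comp φ = g :=
  ⟨(AlgEquiv.ofInjective j hj).symm.toAlgHom.comp (g.codRestrict j.range fun x => h ⟨x, rfl⟩),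
    AlgHom.ext fun x => by
      rw [AlgHom.comp_apply, AlgHom.comp_apply, AlgEquiv.coe_toAlgHom,
        ← AlgEquiv.ofInjective_apply j hj, AlgEquiv.apply_symm_apply, coe_codRestrict]⟩

namespace Algebra.TensorProduct

variable {K A B : Type*} [Field K] [Ring A] [Algebra K A] [Ring B] [Algebra K B]

theorem eq_map_of_range_le (Φ : A ⊗[K] B →ₐ[K] A ⊗[K] B)
    (hA : (Φ.comp includeLeft).range ≤ (includeLeft : A →ₐ[K] A ⊗[K] B).range)
    (hB : (Φ.comp includeRight).range ≤ (includeRight : B →ₐ[K] A ⊗[K] B).range) :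
    ∃ (φ : A →ₐ[K] A) (ψ : B →ₐ[K] B), Φ = map φ ψ := by
  nontriviality A
  nontriviality B
  obtain ⟨φ, hφ⟩ := (Φ.comp includeLeft).exists_comp_eq_of_range_le
    (includeLeft_injective (algebraMap K B).injective) hA
  obtain ⟨ψ, hψ⟩ := (Φ.comp includeRight).exists_comp_eq_of_range_le
    (includeRight_injective (algebraMap K A).injective) hB
  refine ⟨φ, ψ, ext ?_ ?_⟩
  · rw [map_comp_includeLeft, hφ]
  · rw [map_restrictScalars_comp_includeRight, hψ]
    rfl

end Algebra.TensorProduct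

open Algebra.TensorProduct in
theorem tensor_endo_bijective_of_dixmier_factors_general (K A B : Type*) [Field K]
    [Ring A] [Algebra K A] [Ring B] [Algebra K B]
    (hDA : ∀ φ : A →ₐ[K] A, Function.Bijective φ)
    (hDB : ∀ ψ : B →ₐ[K] B, Function.Bijective ψ)
    (Φ : A ⊗[K] B →ₐ[K] A ⊗[K] B)
    (hL : ∀ a : A, ∃ a' : A, Φ (a ⊗ₜ[K] (1 : B)) = a' ⊗ₜ[K] (1 : B))
    (hR : ∀ b : B, ∃ b' : B, Φ ((1 : A) ⊗ₜ[K] b) = (1 : A) ⊗ₜ[K] b') :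
    Function.Bijective Φ := by
  obtain ⟨φ, ψ, rfl⟩ := eq_map_of_range_le Φ
    (by rintro _ ⟨a, rfl⟩; obtain ⟨a', h⟩ := hL a; exact ⟨a', h.symm⟩)
    (by rintro _ ⟨b, rfl⟩; obtain ⟨b', h⟩ := hR b; exact ⟨b', h.symm⟩)
  exact map_bijective (hDA φ) (hDB ψ)

/-- Let `K` be a field and `A`, `B` simple `K`-algebras with the center
of `A` equal to `K·1` or the center of `B` equal to `K·1`.  Suppose every `K`-algebra
endomorphism of `A` is bijective and every `K`-algebra endomorphism of `B` is bijective.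
If `Φ` is a `K`-algebra endomorphism of `A ⊗[K] B` with `Φ(A ⊗ 1) ⊆ A ⊗ 1` and
`Φ(1 ⊗ B) ⊆ 1 ⊗ B`, then `Φ` is bijective. -/
theorem tensor_endo_bijective_of_dixmier_factors (K A B : Type*) [Field K]
    [Ring A] [Algebra K A] [Ring B] [Algebra K B]
    (hsA : ∀ I : TwoSidedIdeal A, I = ⊥ ∨ I = ⊤)
    (hsB : ∀ I : TwoSidedIdeal B, I = ⊥ ∨ I = ⊤)
    (hcenter : Subalgebra.center K A = ⊥ ∨ Subalgebra.center K B = ⊥)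
    (hDA : ∀ φ : A →ₐ[K] A, Function.Bijective φ)
    (hDB : ∀ ψ : B →ₐ[K] B, Function.Bijective ψ)
    (Φ : A ⊗[K] B →ₐ[K] A ⊗[K] B)
    (hL : ∀ a : A, ∃ a' : A, Φ (a ⊗ₜ[K] (1 : B)) = a' ⊗ₜ[K] (1 : B))
    (hR : ∀ b : B, ∃ b' : B, Φ ((1 : A) ⊗ₜ[K] b) = (1 : A) ⊗ₜ[K] b') :
    Function.Bijective Φ :=
  tensor_endo_bijective_of_dixmier_factors_general K A B hDA hDB Φ hL hR
end

section
/- The algebra 𝒞𝒮𝒟_n(K) is a left and right Noetherian domain, and its units are exactly the nonzero scalars: an element u ∈ 𝒞𝒮𝒟_n(K) is invertible if and only if u = c·1 for some c ∈ K \ {0}. -/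
/-- The defining relations of the algebra `𝒞𝒮𝒟ₙ(K)`:
`xⱼ xᵢ = xᵢ xⱼ + dᵢⱼ` for `i < j`. -/
def csdRel (K : Type*) [Field K] {n : ℕ} (d : Fin n → Fin n → K) :
    FreeAlgebra K (Fin n) → FreeAlgebra K (Fin n) → Prop := fun a b =>
  ∃ i j : Fin n, i < j ∧
    a = FreeAlgebra.ι K j * FreeAlgebra.ι K i ∧
    b = FreeAlgebra.ι K i * FreeAlgebra.ι K j +
      algebraMap K (FreeAlgebra K (Fin n)) (d i j)

/-- The algebra `𝒞𝒮𝒟ₙ(K)`: the quotient of the free algebra on `x₁, …, xₙ` by the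
two-sided ideal generated by the relations `xⱼ xᵢ − xᵢ xⱼ − dᵢⱼ` for `i < j`. -/
abbrev CSD (K : Type*) [Field K] {n : ℕ} (d : Fin n → Fin n → K) : Type _ :=
  RingQuot (csdRel K d)

/-!
`𝒞𝒮𝒟ₙ(K)` acts on `K[X₁, …, Xₙ]` by `xᵢ ↦ Xᵢ + ∑_{k<i} dₖᵢ ∂ₖ`, and `a ↦ a · 1` is a linear
isomorphism whose inverse sends `X^γ` to the ordered monomial `x^γ` (a PBW theorem, proved by
checking that normal ordering intertwines the two actions of `xᵢ`). Because the generators commute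
up to scalars, `xᵢ` acts as multiplication by `Xᵢ` up to terms that are lower in any monomial
order, so leading terms multiply: the leading term of `a b` is that of `a` times that of `b`.
This makes the algebra a domain whose units have leading exponent `0`, i.e. are scalars, and
bounds its chains of left ideals by chains of monomial ideals of `K[X]`, which stabilise by
Hilbert's basis theorem. The opposite algebra has the same property since `K[X]` is commutative.
-/

open MvPolynomial

namespace MonomialOrder

variable {σ : Type*} (m : MonomialOrder σ)

lemma lt_add_single (δ : σ →₀ ℕ) (i : σ) : δ ≺[m] δ + Finsupp.single i 1 := by
  rw [map_add]
  exact lt_add_of_pos_right _ (m.toSyn_lt_iff_ne_zero.2 (by simp))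

section Below

variable (R : Type*) [CommSemiring R]

noncomputable def below (μ : σ →₀ ℕ) : Submodule R (MvPolynomial σ R) :=
  restrictSupport R {δ | δ ≺[m] μ}

variable {m R} {μ ν : σ →₀ ℕ} {f p : MvPolynomial σ R}

lemma mem_below_iff : p ∈ m.below R μ ↔ ∀ δ ∈ p.support, δ ≺[m] μ := by
  rw [below, mem_restrictSupport_iff]; rfl

lemma below_mono (h : μ ≼[m] ν) : m.below R μ ≤ m.below R ν :=
  restrictSupport_mono R fun _ hδ => lt_of_lt_of_le hδ h

lemma degree_lt_of_mem_below (hp : p ∈ m.below R μ) (hp0 : p ≠ 0) : m.degree p ≺[m] μ :=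
  mem_below_iff.1 hp _ (m.degree_mem_support hp0)

lemma degree_le_of_mem_below (hp : p ∈ m.below R μ) : m.degree p ≼[m] μ := by
  rcases eq_or_ne p 0 with rfl | hp0
  · simp
  · exact (degree_lt_of_mem_below hp hp0).le

open scoped Pointwise in
lemma monomial_mul_mem_below (δ : σ →₀ ℕ) (c : R) (hp : p ∈ m.below R μ) :
    monomial δ c * p ∈ m.below R (δ + μ) := by
  have h : monomial δ c * p ∈ restrictSupport R (({δ} : Set (σ →₀ ℕ)) + {ε | ε ≺[m] μ}) := by
    rw [restrictSupport_add]
    exact Submodule.mul_mem_mul (by simp [monomial_mem_restrictSupport]) hp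
  refine restrictSupport_mono R ?_ h
  rintro _ ⟨_, rfl, ε, hε, rfl⟩
  simpa [map_add] using hε

lemma pderiv_mem_below (i : σ) (hf : m.degree f ≼[m] μ) : pderiv i f ∈ m.below R μ := by
  refine mem_below_iff.2 fun δ hδ => ?_
  rw [mem_support_iff, coeff_pderiv] at hδ
  have hmem : δ + Finsupp.single i 1 ∈ f.support := mem_support_iff.2 (left_ne_zero_of_mul hδ)
  exact lt_of_lt_of_le (m.lt_add_single δ i) ((m.le_degree hmem).trans hf)

lemma leadingTerm_add_of_mem_below {r : MvPolynomial σ R} (hr : r ∈ m.below R (m.degree f)) :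
    m.leadingTerm (f + r) = m.leadingTerm f := by
  rcases eq_or_ne r 0 with rfl | hr0
  · rw [add_zero]
  have hlt := degree_lt_of_mem_below hr hr0
  rw [leadingTerm_eq_leadingTerm_iff]
  exact ⟨m.leadingCoeff_add_of_lt hlt, m.degree_add_of_lt hlt⟩

end Below

section DegreeSet

variable {K : Type*} [Field K]

def degreeSet (V : Submodule K (MvPolynomial σ K)) : Set (σ →₀ ℕ) :=
  {μ | ∃ p ∈ V, p ≠ 0 ∧ m.degree p = μ}

variable {m}

lemma degreeSet_mono {V W : Submodule K (MvPolynomial σ K)} (h : V ≤ W) :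
    m.degreeSet V ⊆ m.degreeSet W := by
  rintro μ ⟨p, hp, hp0, rfl⟩
  exact ⟨p, h hp, hp0, rfl⟩

lemma sub_smul_eq_zero_or_degree_lt {p q : MvPolynomial σ K} (hp : p ≠ 0)
    (h : m.degree p = m.degree q) :
    q - (m.leadingCoeff q / m.leadingCoeff p) • p = 0 ∨
      m.degree (q - (m.leadingCoeff q / m.leadingCoeff p) • p) ≺[m] m.degree q := by
  set r := q - (m.leadingCoeff q / m.leadingCoeff p) • p
  refine or_iff_not_imp_left.2 fun hr => lt_of_le_of_ne ?_ fun hdeg => ?_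
  · exact m.degree_sub_le.trans (sup_le le_rfl (m.degree_smul_le.trans (congrArg m.toSyn h).le))
  · have hcoeff : r.coeff (m.degree q) = 0 := by
      rw [coeff_sub, coeff_smul, ← h]
      simp [leadingCoeff, ← h, div_mul_cancel₀ _ (m.coeff_degree_ne_zero_iff.2 hp)]
    exact (m.coeff_degree_ne_zero_iff.2 hr) (m.toSyn.injective hdeg ▸ hcoeff)

theorem le_of_degreeSet_subset {V W : Submodule K (MvPolynomial σ K)} (hVW : V ≤ W)
    (h : m.degreeSet W ⊆ m.degreeSet V) : W ≤ V := by
  suffices ∀ μ, ∀ q ∈ W, m.toSyn (m.degree q) = μ → q ∈ V from fun q hq => this _ q hq rfl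
  intro μ
  induction μ using WellFoundedLT.induction with
  | ind μ ih =>
    intro q hq hμ
    rcases eq_or_ne q 0 with rfl | hq0
    · exact V.zero_mem
    obtain ⟨p, hpV, hp0, hpq⟩ := h ⟨q, hq, hq0, rfl⟩
    have hc : (m.leadingCoeff q / m.leadingCoeff p) • p ∈ V := V.smul_mem _ hpV
    rw [← sub_add_cancel q ((m.leadingCoeff q / m.leadingCoeff p) • p)]
    refine V.add_mem ?_ hc
    rcases sub_smul_eq_zero_or_degree_lt hp0 hpq with h0 | hlt
    · rw [h0]; exact V.zero_mem
    · exact ih _ (hμ ▸ hlt) _ (W.sub_mem hq (hVW hc)) rfl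

end DegreeSet

variable {K A : Type*} [Field K] [Ring A] [Algebra K A]

/-- Equivalently, the associated graded algebra of `A` for the filtration given by `m` is `K[σ]`. -/
def LeadingTermMul (e : A ≃ₗ[K] MvPolynomial σ K) : Prop :=
  ∀ a b, m.leadingTerm (e (a * b)) = m.leadingTerm (e a) * m.leadingTerm (e b)

noncomputable def leadingIdeal (e : A ≃ₗ[K] MvPolynomial σ K) (N : Submodule A A) :
    Ideal (MvPolynomial σ K) :=
  Ideal.span ((monomial · 1) '' m.degreeSet ((N.restrictScalars K).map e.toLinearMap))

namespace LeadingTermMul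

variable {m} {e : A ≃ₗ[K] MvPolynomial σ K} (h : m.LeadingTermMul e)
include h

theorem op : m.LeadingTermMul ((MulOpposite.opLinearEquiv K).symm.trans e) := fun a b => by
  simp only [LinearEquiv.trans_apply, MulOpposite.coe_opLinearEquiv_symm, MulOpposite.unop_mul]
  rw [h, mul_comm]

theorem degree_mul {a b : A} (ha : a ≠ 0) (hb : b ≠ 0) :
    m.degree (e (a * b)) = m.degree (e a) + m.degree (e b) := by
  rw [← degree_leadingTerm, h, m.degree_mul, degree_leadingTerm, degree_leadingTerm] <;>
    simpa [leadingTerm_eq_zero_iff]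

theorem mul_ne_zero {a b : A} (ha : a ≠ 0) (hb : b ≠ 0) : a * b ≠ 0 := by
  rw [← e.map_ne_zero_iff, ne_eq, ← m.leadingTerm_eq_zero_iff, h]
  exact _root_.mul_ne_zero (by simpa [leadingTerm_eq_zero_iff]) (by simpa [leadingTerm_eq_zero_iff])

theorem isDomain : IsDomain A :=
  have : Nontrivial A := e.surjective.nontrivial
  have : NoZeroDivisors A := ⟨fun {a b} hab => by
    by_contra! hne
    exact h.mul_ne_zero hne.1 hne.2 hab⟩
  NoZeroDivisors.to_isDomain A

theorem isUnit_iff (h1 : e 1 = 1) (u : A) :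
    IsUnit u ↔ ∃ c : K, c ≠ 0 ∧ u = algebraMap K A c := by
  have : Nontrivial A := e.surjective.nontrivial
  refine ⟨fun hu => ?_, fun ⟨c, hc, hu⟩ => hu ▸ (IsUnit.mk0 c hc).map (algebraMap K A)⟩
  obtain ⟨v, huv⟩ := hu.exists_right_inv
  have hu0 : u ≠ 0 := hu.ne_zero
  have hv0 : v ≠ 0 := right_ne_zero_of_mul (huv.symm ▸ one_ne_zero)
  have hdeg : m.degree (e u) = 0 := by
    have := h.degree_mul hu0 hv0
    rw [huv, h1, degree_one] at this
    exact (add_eq_zero.1 this.symm).1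
  refine ⟨m.leadingCoeff (e u), by simpa [m.leadingCoeff_ne_zero_iff], ?_⟩
  apply e.injective
  conv_lhs => rw [eq_C_of_degree_eq_zero hdeg]
  rw [Algebra.algebraMap_eq_smul_one, map_smul, h1, C_eq_smul_one]

theorem add_mem_degreeSet (N : Submodule A A) {μ : σ →₀ ℕ}
    (hμ : μ ∈ m.degreeSet ((N.restrictScalars K).map e.toLinearMap)) (δ : σ →₀ ℕ) :
    δ + μ ∈ m.degreeSet ((N.restrictScalars K).map e.toLinearMap) := by
  classical
  obtain ⟨_, hp, hp0, rfl⟩ := hμ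
  obtain ⟨a, ha, rfl⟩ := Submodule.mem_map.1 hp
  have ha0 : a ≠ 0 := by rintro rfl; exact hp0 (map_zero _)
  have hb0 : e.symm (monomial δ 1) ≠ 0 := by simp
  refine ⟨e (e.symm (monomial δ 1) * a), Submodule.mem_map_of_mem (N.smul_mem _ ha),
    e.map_ne_zero_iff.2 (h.mul_ne_zero hb0 ha0), ?_⟩
  rw [h.degree_mul hb0 ha0, e.apply_symm_apply, degree_monomial, if_neg one_ne_zero]
  rfl

theorem strictMono_leadingIdeal : StrictMono (m.leadingIdeal e) := by
  classical
  intro N N' hlt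
  have hmap : (N.restrictScalars K).map e.toLinearMap ≤ (N'.restrictScalars K).map e.toLinearMap :=
    Submodule.map_mono hlt.le
  refine lt_of_le_of_ne (Ideal.span_mono (Set.image_mono (degreeSet_mono hmap))) fun heq => ?_
  have hsub := le_of_degreeSet_subset hmap fun μ hμ => by
    have hmem : monomial μ (1 : K) ∈ m.leadingIdeal e N := heq ▸ Ideal.subset_span ⟨μ, hμ, rfl⟩
    obtain ⟨ν, hν, hνμ⟩ := mem_ideal_span_monomial_image.1 hmem μ (by simp)
    simpa [tsub_add_cancel_of_le hνμ] using h.add_mem_degreeSet N hν (μ - ν)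
  refine hlt.not_ge fun a ha => ?_
  obtain ⟨b, hb, hba⟩ := hsub (Submodule.mem_map_of_mem (f := e.toLinearMap) ha)
  exact e.injective hba ▸ hb

theorem isNoetherianRing [Finite σ] : IsNoetherianRing A :=
  isNoetherian_iff'.2 h.strictMono_leadingIdeal.wellFoundedGT

end LeadingTermMul

end MonomialOrder

namespace Finsupp

variable {σ : Type*}

lemma degree_sub_single_one_lt {γ : σ →₀ ℕ} {k : σ} (hk : γ k ≠ 0) :
    (γ - single k 1).degree < γ.degree := by
  have := congrArg degree (sub_add_single_one_cancel hk)
  rw [map_add, degree_single] at this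
  omega

variable [LinearOrder σ]

lemma apply_eq_zero_of_lt_min' {γ : σ →₀ ℕ} (hγ : γ.support.Nonempty) {j : σ}
    (hj : j < γ.support.min' hγ) : γ j = 0 :=
  notMem_support_iff.1 fun h => (Finset.min'_le _ _ h).not_gt hj

lemma min'_support_add_single {δ : σ →₀ ℕ} {k : σ} (hδ : ∀ j < k, δ j = 0)
    (h : (δ + single k 1).support.Nonempty) : (δ + single k 1).support.min' h = k := by
  refine le_antisymm (Finset.min'_le _ _ (by simp)) (Finset.le_min' _ _ _ fun j hj => ?_)
  by_contra! hjk
  simp [hδ j hjk, hjk.ne'] at hj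

theorem induction_on_min_add_single {P : (σ →₀ ℕ) → Prop} (zero : P 0)
    (add_single : ∀ k δ, (∀ j < k, δ j = 0) → P δ → P (δ + single k 1)) (γ : σ →₀ ℕ) : P γ := by
  induction hN : γ.degree using Nat.strong_induction_on generalizing γ with
  | _ N ih =>
    rcases eq_or_ne γ 0 with rfl | hγ
    · exact zero
    have hne : γ.support.Nonempty := support_nonempty_iff.2 hγ
    have hk : γ (γ.support.min' hne) ≠ 0 := mem_support_iff.1 (Finset.min'_mem _ _)
    rw [← sub_add_single_one_cancel hk]
    refine add_single _ _ (fun j hj => ?_) (ih _ ?_ _ rfl)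
    · rw [tsub_apply, apply_eq_zero_of_lt_min' hne hj, zero_tsub]
    · exact hN ▸ degree_sub_single_one_lt hk

end Finsupp

namespace CSD

variable {K : Type*} [Field K] {n : ℕ} (d : Fin n → Fin n → K)

noncomputable def x (i : Fin n) : CSD K d :=
  RingQuot.mkAlgHom K (csdRel K d) (FreeAlgebra.ι K i)

theorem x_mul_x {i j : Fin n} (h : i < j) :
    x d j * x d i = x d i * x d j + algebraMap K (CSD K d) (d i j) := by
  simpa only [x, map_mul, map_add, AlgHom.commutes] using
    RingQuot.mkAlgHom_rel K (s := csdRel K d) ⟨i, j, h, rfl, rfl⟩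

noncomputable def D (i : Fin n) : Derivation K (MvPolynomial (Fin n) K) (MvPolynomial (Fin n) K) :=
  ∑ k ∈ Finset.Iio i, d k i • pderiv k

lemma D_apply (i : Fin n) (f : MvPolynomial (Fin n) K) :
    D d i f = ∑ k ∈ Finset.Iio i, d k i • pderiv k f := by
  rw [D, ← Derivation.coeFnAddMonoidHom_apply, map_sum, Finset.sum_apply]
  rfl

lemma D_X (i j : Fin n) : D d i (X j) = if j < i then C (d j i) else 0 := by
  classical
  simp only [D_apply, pderiv_X, Pi.single_apply, smul_ite, smul_zero, Finset.sum_ite_eq,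
    Finset.mem_Iio, C_eq_smul_one]

lemma D_comm (i j : Fin n) (f : MvPolynomial (Fin n) K) :
    D d i (D d j f) = D d j (D d i f) := by
  rw [← sub_eq_zero, ← Derivation.commutator_apply]
  suffices h : ⁅D d i, D d j⁆ = 0 by rw [h, Derivation.zero_apply]
  refine derivation_ext fun k => ?_
  rw [Derivation.commutator_apply, D_X, D_X]
  split_ifs <;> simp [← algebraMap_eq]

noncomputable def T (i : Fin n) : Module.End K (MvPolynomial (Fin n) K) :=
  LinearMap.mulLeft K (X i) + (D d i).toLinearMap

lemma T_apply (i : Fin n) (f : MvPolynomial (Fin n) K) : T d i f = X i * f + D d i f := rfl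

lemma T_mul_T {i j : Fin n} (h : i < j) :
    T d j * T d i = T d i * T d j + algebraMap K _ (d i j) := by
  refine LinearMap.ext fun f => ?_
  simp only [Module.End.mul_apply, LinearMap.add_apply, Module.algebraMap_end_apply, T_apply,
    map_add, Derivation.leibniz, D_X, if_pos h, if_neg h.not_gt, D_comm d i j, smul_eq_mul,
    C_eq_smul_one, mul_smul_comm, mul_one]
  ring

noncomputable def toEnd : CSD K d →ₐ[K] Module.End K (MvPolynomial (Fin n) K) :=
  RingQuot.liftAlgHom K ⟨FreeAlgebra.lift K (T d), by
    rintro _ _ ⟨i, j, hij, rfl, rfl⟩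
    simp only [map_mul, map_add, FreeAlgebra.lift_ι_apply, AlgHom.commutes]
    exact T_mul_T d hij⟩

lemma toEnd_x (i : Fin n) : toEnd d (x d i) = T d i := by
  rw [toEnd, x, RingQuot.liftAlgHom_mkAlgHom_apply, FreeAlgebra.lift_ι_apply]

/-- The ordered monomial `x^γ = x_{i₁} x_{i₂} ⋯ x_{iₘ}` with `i₁ ≤ i₂ ≤ ⋯ ≤ iₘ`. -/
noncomputable def orderedMonomial (γ : Fin n →₀ ℕ) : CSD K d :=
  if h : γ = 0 then 1
  else x d (γ.support.min' (Finsupp.support_nonempty_iff.2 h)) *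
    orderedMonomial (γ - Finsupp.single (γ.support.min' (Finsupp.support_nonempty_iff.2 h)) 1)
termination_by γ.degree
decreasing_by
  exact Finsupp.degree_sub_single_one_lt (Finsupp.mem_support_iff.1 (Finset.min'_mem _ _))

lemma orderedMonomial_zero : orderedMonomial d 0 = 1 := by
  rw [orderedMonomial, dif_pos rfl]

lemma x_mul_orderedMonomial {k : Fin n} {γ : Fin n →₀ ℕ} (hγ : ∀ j < k, γ j = 0) :
    x d k * orderedMonomial d γ = orderedMonomial d (γ + Finsupp.single k 1) := by
  conv_rhs => rw [orderedMonomial, dif_neg (by simp)]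
  simp only [Finsupp.min'_support_add_single hγ, add_tsub_cancel_right]

noncomputable def normalOrder : MvPolynomial (Fin n) K →ₗ[K] CSD K d :=
  (basisMonomials (Fin n) K).constr K (orderedMonomial d)

lemma normalOrder_monomial (γ : Fin n →₀ ℕ) (c : K) :
    normalOrder d (monomial γ c) = c • orderedMonomial d γ := by
  have h : monomial γ c = c • basisMonomials (Fin n) K γ := by
    rw [coe_basisMonomials, smul_monomial, smul_eq_mul, mul_one]
  rw [h, map_smul, normalOrder, Module.Basis.constr_basis]

noncomputable def restrictGE (k : Fin n) : Submodule K (MvPolynomial (Fin n) K) :=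
  restrictSupport K {δ | ∀ j < k, δ j = 0}

lemma monomial_mem_restrictGE {k : Fin n} {γ : Fin n →₀ ℕ} (hγ : ∀ j < k, γ j = 0) (c : K) :
    monomial γ c ∈ restrictGE k :=
  (monomial_mem_restrictSupport K).2 (Or.inl hγ)

lemma T_monomial {i : Fin n} {γ : Fin n →₀ ℕ} (hγ : ∀ j < i, γ j = 0) :
    T d i (monomial γ 1) = monomial (γ + Finsupp.single i 1) 1 := by
  rw [T_apply, D_apply, Finset.sum_eq_zero, add_zero, X, monomial_mul, one_mul, add_comm]
  intro k hk
  rw [pderiv_monomial, hγ k (Finset.mem_Iio.1 hk), Nat.cast_zero, mul_zero, monomial_zero,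
    smul_zero]

open scoped Pointwise in
lemma T_mem_restrictGE {i k : Fin n} (hki : k ≤ i) {f : MvPolynomial (Fin n) K}
    (hf : f ∈ restrictGE k) : T d i f ∈ restrictGE k := by
  rw [T_apply, D_apply]
  refine add_mem ?_ (sum_mem fun l _ => Submodule.smul_mem _ _ ?_)
  · have hX : X i * f ∈ restrictSupport K (({Finsupp.single i 1} : Set (Fin n →₀ ℕ)) +
        {δ | ∀ j < k, δ j = 0}) := by
      rw [restrictSupport_add]
      exact Submodule.mul_mem_mul (by simp [X, monomial_mem_restrictSupport]) hf
    refine restrictSupport_mono K ?_ hX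
    rintro _ ⟨_, rfl, δ, hδ, rfl⟩ j hj
    simp [hδ j hj, (hj.trans_le hki).ne']
  · rw [restrictGE, mem_restrictSupport_iff] at hf ⊢
    intro δ hδ j hj
    rw [Finset.mem_coe, mem_support_iff, coeff_pderiv] at hδ
    have := hf (mem_support_iff.2 (left_ne_zero_of_mul hδ)) j hj
    rw [Finsupp.add_apply] at this
    omega

lemma normalOrder_T_of_mem {k : Fin n} {f : MvPolynomial (Fin n) K} (hf : f ∈ restrictGE k) :
    normalOrder d (T d k f) = x d k * normalOrder d f := by
  rw [restrictGE, restrictSupport_eq_span] at hf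
  induction hf using Submodule.span_induction with
  | mem _ h =>
    obtain ⟨δ, hδ, rfl⟩ := h
    rw [T_monomial d hδ, normalOrder_monomial, normalOrder_monomial, one_smul, one_smul,
      x_mul_orderedMonomial d hδ]
  | zero => simp
  | add f g _ _ hf hg => simp only [map_add, hf, hg, mul_add]
  | smul c f _ hf => simp only [map_smul, hf, mul_smul_comm]

lemma normalOrder_one : normalOrder d 1 = 1 := by
  rw [← C_1, ← monomial_zero', normalOrder_monomial, one_smul, orderedMonomial_zero]

lemma normalOrder_T_monomial (γ : Fin n →₀ ℕ) (i : Fin n) :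
    normalOrder d (T d i (monomial γ 1)) = x d i * orderedMonomial d γ := by
  have of_mem {i : Fin n} {γ : Fin n →₀ ℕ} (hγ : ∀ j < i, γ j = 0) :
      normalOrder d (T d i (monomial γ 1)) = x d i * orderedMonomial d γ := by
    rw [normalOrder_T_of_mem d (monomial_mem_restrictGE hγ 1), normalOrder_monomial, one_smul]
  induction γ using Finsupp.induction_on_min_add_single generalizing i with
  | zero => exact of_mem fun _ _ => rfl
  | add_single k δ hδ ih =>
    rcases le_or_gt i k with hik | hki
    · refine of_mem fun j hj => ?_
      simp [hδ j (hj.trans_le hik), (hj.trans_le hik).ne']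
    calc normalOrder d (T d i (monomial (δ + Finsupp.single k 1) 1))
        = normalOrder d ((T d i * T d k) (monomial δ 1)) := by
          rw [Module.End.mul_apply, T_monomial d hδ]
      _ = x d k * normalOrder d (T d i (monomial δ 1)) + d k i • orderedMonomial d δ := by
          rw [T_mul_T d hki, LinearMap.add_apply, Module.End.mul_apply,
            Module.algebraMap_end_apply, map_add, map_smul,
            normalOrder_T_of_mem d (T_mem_restrictGE d hki.le (monomial_mem_restrictGE hδ 1)),
            normalOrder_monomial, one_smul]
      _ = x d i * orderedMonomial d (δ + Finsupp.single k 1) := by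
          rw [ih, ← x_mul_orderedMonomial d hδ, ← mul_assoc, ← mul_assoc, x_mul_x d hki, add_mul,
            Algebra.smul_def]

lemma normalOrder_T (i : Fin n) (f : MvPolynomial (Fin n) K) :
    normalOrder d (T d i f) = x d i * normalOrder d f := by
  have : normalOrder d ∘ₗ T d i = LinearMap.mulLeft K (x d i) ∘ₗ normalOrder d :=
    (basisMonomials (Fin n) K).ext fun γ => by
      simp [coe_basisMonomials, normalOrder_T_monomial, normalOrder_monomial]
  exact LinearMap.congr_fun this f

lemma normalOrder_toEnd (a : CSD K d) (f : MvPolynomial (Fin n) K) :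
    normalOrder d (toEnd d a f) = a * normalOrder d f := by
  obtain ⟨t, rfl⟩ := RingQuot.mkAlgHom_surjective K (csdRel K d) a
  induction t using FreeAlgebra.induction generalizing f with
  | grade0 r =>
    rw [AlgHom.commutes, AlgHom.commutes, Module.algebraMap_end_apply, map_smul, Algebra.smul_def]
  | grade1 i =>
    change normalOrder d (toEnd d (x d i) f) = x d i * normalOrder d f
    rw [toEnd_x, normalOrder_T]
  | mul a b ha hb => rw [map_mul, map_mul, Module.End.mul_apply, ha, hb, mul_assoc]
  | add a b ha hb => rw [map_add, map_add, LinearMap.add_apply, map_add, ha, hb, add_mul]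

lemma toEnd_orderedMonomial_one (γ : Fin n →₀ ℕ) :
    toEnd d (orderedMonomial d γ) 1 = monomial γ 1 := by
  induction γ using Finsupp.induction_on_min_add_single with
  | zero => simp [orderedMonomial_zero, monomial_zero']
  | add_single k δ hδ ih =>
    rw [← x_mul_orderedMonomial d hδ, map_mul, Module.End.mul_apply, ih, toEnd_x, T_monomial d hδ]

noncomputable def symbol : CSD K d ≃ₗ[K] MvPolynomial (Fin n) K :=
  LinearEquiv.ofLinearMap (LinearMap.applyₗ 1 ∘ₗ (toEnd d).toLinearMap) (normalOrder d)
    ((basisMonomials (Fin n) K).ext fun γ => by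
      simp [coe_basisMonomials, normalOrder_monomial, toEnd_orderedMonomial_one])
    (LinearMap.ext fun a => by
      simp [normalOrder_toEnd, normalOrder_one])

lemma symbol_apply (a : CSD K d) : symbol d a = toEnd d a 1 := rfl

lemma normalOrder_symbol (a : CSD K d) : normalOrder d (symbol d a) = a :=
  (symbol d).symm_apply_apply a

lemma symbol_one : symbol d 1 = 1 := by
  simp [symbol_apply]

open MonomialOrder

variable (m : MonomialOrder (Fin n))

lemma D_mem_below (i : Fin n) {f : MvPolynomial (Fin n) K} {μ : Fin n →₀ ℕ}
    (hf : m.degree f ≼[m] μ) : D d i f ∈ m.below K μ := by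
  rw [D_apply]
  exact sum_mem fun k _ => Submodule.smul_mem _ _ (m.pderiv_mem_below k hf)

lemma toEnd_orderedMonomial_sub_mem_below (γ : Fin n →₀ ℕ) (p : MvPolynomial (Fin n) K) :
    toEnd d (orderedMonomial d γ) p - monomial γ 1 * p ∈ m.below K (γ + m.degree p) := by
  induction γ using Finsupp.induction_on_min_add_single with
  | zero => simp [orderedMonomial_zero, monomial_zero']
  | add_single k δ hδ ih =>
    set f := toEnd d (orderedMonomial d δ) p
    have hf : m.degree f ≼[m] δ + m.degree p := by
      have h1 : m.degree (monomial δ 1 * p) ≼[m] δ + m.degree p := by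
        refine m.degree_mul_le.trans ?_
        rw [map_add, map_add]
        exact add_le_add (m.degree_monomial_le 1) le_rfl
      rw [← add_sub_cancel (monomial δ 1 * p) f]
      exact m.degree_add_le.trans (max_le h1 (degree_le_of_mem_below ih))
    have h : toEnd d (orderedMonomial d (δ + Finsupp.single k 1)) p -
        monomial (δ + Finsupp.single k 1) 1 * p =
        monomial (Finsupp.single k 1) 1 * (f - monomial δ 1 * p) + D d k f := by
      rw [← x_mul_orderedMonomial d hδ, map_mul, Module.End.mul_apply, toEnd_x, T_apply, X, mul_sub,
        ← mul_assoc, monomial_mul, one_mul, add_comm (Finsupp.single k 1) δ]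
      ring
    rw [h]
    refine add_mem ?_ (D_mem_below d m k (hf.trans ?_))
    · have := monomial_mul_mem_below (Finsupp.single k 1) (1 : K) ih
      rwa [← add_assoc, add_comm (Finsupp.single k 1) δ] at this
    · simp only [map_add]
      exact add_le_add (m.le_add_right δ _) le_rfl

lemma toEnd_normalOrder_sub_mul_mem_below (q p : MvPolynomial (Fin n) K) :
    toEnd d (normalOrder d q) p - q * p ∈ m.below K (m.degree q + m.degree p) := by
  have h : toEnd d (normalOrder d q) p - q * p = ∑ γ ∈ q.support,
      coeff γ q • (toEnd d (orderedMonomial d γ) p - monomial γ 1 * p) := by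
    have hmon : ∀ γ, monomial γ (coeff γ q) = coeff γ q • monomial γ 1 := fun γ => by
      rw [smul_monomial, smul_eq_mul, mul_one]
    conv_lhs => rw [q.as_sum]
    simp only [map_sum, normalOrder_monomial, map_smul, LinearMap.sum_apply, LinearMap.smul_apply,
      Finset.sum_mul, hmon, smul_mul_assoc, one_smul, smul_sub, Finset.sum_sub_distrib]
  rw [h]
  refine sum_mem fun γ hγ => Submodule.smul_mem _ _ (below_mono ?_
    (toEnd_orderedMonomial_sub_mem_below d m γ p))
  simp only [map_add]
  exact add_le_add (m.le_degree hγ) le_rfl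

theorem leadingTermMul : m.LeadingTermMul (symbol d) := fun a b => by
  rcases eq_or_ne a 0 with rfl | ha
  · simp
  rcases eq_or_ne b 0 with rfl | hb
  · simp
  have hab : symbol d (a * b) = symbol d a * symbol d b +
      (toEnd d a (symbol d b) - symbol d a * symbol d b) := by
    rw [add_sub_cancel, symbol_apply, symbol_apply, map_mul, Module.End.mul_apply]
  rw [hab, leadingTerm_add_of_mem_below, m.leadingTerm_mul]
  rw [m.degree_mul ((symbol d).map_ne_zero_iff.2 ha) ((symbol d).map_ne_zero_iff.2 hb)]
  simpa only [normalOrder_symbol] using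
    toEnd_normalOrder_sub_mul_mem_below d m (symbol d a) (symbol d b)

end CSD

theorem csd_noetherian_domain_units_general (K : Type*) [Field K]
    (n : ℕ)
    (d : Fin n → Fin n → K) :
    IsNoetherianRing (CSD K d) ∧ IsNoetherianRing (CSD K d)ᵐᵒᵖ ∧
    IsDomain (CSD K d) ∧
    (∀ u : CSD K d, IsUnit u ↔ ∃ c : K, c ≠ 0 ∧ u = algebraMap K (CSD K d) c) :=
  have h := CSD.leadingTermMul d MonomialOrder.degLex
  ⟨h.isNoetherianRing, h.op.isNoetherianRing, h.isDomain, h.isUnit_iff (CSD.symbol_one d)⟩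

/-- `𝒞𝒮𝒟ₙ(K)` is a left and right Noetherian domain whose units are
exactly the nonzero scalars. -/
theorem csd_noetherian_domain_units (K : Type*) [Field K] [CharZero K]
    (n : ℕ) (hn : 2 ≤ n)
    (d : Fin n → Fin n → K) (hd : ∀ i j : Fin n, i < j → d i j ≠ 0) :
    IsNoetherianRing (CSD K d) ∧ IsNoetherianRing (CSD K d)ᵐᵒᵖ ∧
    IsDomain (CSD K d) ∧
    (∀ u : CSD K d, IsUnit u ↔ ∃ c : K, c ≠ 0 ∧ u = algebraMap K (CSD K d) c) :=
  csd_noetherian_domain_units_general K n d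
end

section
/- Let K be a field of characteristic zero and n ≥ 1. If every K-algebra endomorphism of the n-th Weyl algebra A_n(K) is bijective, then the Jacobian conjecture holds in n variables over K: every K-algebra endomorphism σ of the polynomial algebra K[t_1, …, t_n] whose Jacobian determinant det[∂σ(t_i)/∂t_j] is a nonzero constant polynomial (an element of K \ {0}) is bijective. -/
/-!
Let `J` be the Jacobian matrix of `σ`. As `det J` is a unit, the derivations
`Dᵢ = ∑ₖ (J⁻¹)ₖᵢ ∂ₖ` of `K[t]` satisfy `Dᵢ (σ tⱼ) = δᵢⱼ`, and they pairwise commute because a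
derivation killing every `σ tⱼ` vanishes. Hence `tⱼ ↦ σ tⱼ`, `xᵢ ↦ ∑ₖ (J⁻¹)ₖᵢ xₖ` respects the
Weyl relations and defines an endomorphism `Φ` of `Aₙ(K)` extending `σ` on `K[t] ⊆ Aₙ(K)`, so `σ`
is injective when `Φ` is. For surjectivity, a preimage of `tᵢ` under `Φ` commutes with every `tⱼ`;
in characteristic zero the polynomial representation (`tⱼ` by multiplication, `xᵢ` by `∂ᵢ`) is
faithful on the normal-ordered elements `∑ c_β(t) x^β`, which span `Aₙ(K)`, so the centraliser of
the `tⱼ` is `K[t]` and the preimage is some `p(t)` with `σ p = tᵢ`.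
-/

/-- The defining relations of the `n`-th Weyl algebra `Aₙ(K)` on generators
`t₁, …, tₙ` (indexed by `Sum.inl`) and `x₁, …, xₙ` (indexed by `Sum.inr`):
`xᵢ tⱼ = tⱼ xᵢ + δᵢⱼ`, `xᵢ xⱼ = xⱼ xᵢ` and `tᵢ tⱼ = tⱼ tᵢ`. -/
def weylNRel (K : Type*) [Field K] (n : ℕ) :
    FreeAlgebra K (Fin n ⊕ Fin n) → FreeAlgebra K (Fin n ⊕ Fin n) → Prop := fun a b =>
  (∃ i j : Fin n,
    a = FreeAlgebra.ι K (Sum.inr i) * FreeAlgebra.ι K (Sum.inl j) ∧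
    b = FreeAlgebra.ι K (Sum.inl j) * FreeAlgebra.ι K (Sum.inr i) +
      (if i = j then 1 else 0)) ∨
  (∃ i j : Fin n,
    a = FreeAlgebra.ι K (Sum.inr i) * FreeAlgebra.ι K (Sum.inr j) ∧
    b = FreeAlgebra.ι K (Sum.inr j) * FreeAlgebra.ι K (Sum.inr i)) ∨
  (∃ i j : Fin n,
    a = FreeAlgebra.ι K (Sum.inl i) * FreeAlgebra.ι K (Sum.inl j) ∧
    b = FreeAlgebra.ι K (Sum.inl j) * FreeAlgebra.ι K (Sum.inl i))

/-- The `n`-th Weyl algebra `Aₙ(K)`. -/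
abbrev WeylN (K : Type*) [Field K] (n : ℕ) : Type _ := RingQuot (weylNRel K n)

open MvPolynomial

noncomputable section

lemma Derivation.finset_sum_apply {R A M ι : Type*} [CommSemiring R] [CommSemiring A]
    [AddCommMonoid M] [Algebra R A] [Module A M] [Module R M] (s : Finset ι)
    (D : ι → Derivation R A M) (a : A) : (∑ k ∈ s, D k) a = ∑ k ∈ s, D k a := by
  classical
  induction s using Finset.induction_on <;> simp [*]

lemma Finsupp.prod_descFactorial_eq_zero_iff {ι : Type*} (γ β : ι →₀ ℕ) :
    (γ.prod fun a e => (β a).descFactorial e) = 0 ↔ ¬ γ ≤ β := by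
  simp only [Finsupp.prod, Finset.prod_eq_zero_iff, Finsupp.mem_support_iff,
    Nat.descFactorial_eq_zero_iff_lt, Finsupp.le_def, not_forall, not_le]
  exact ⟨fun ⟨a, _, h⟩ => ⟨a, h⟩, fun ⟨a, h⟩ => ⟨a, by omega, h⟩⟩

namespace MvPolynomial

variable {R ι : Type*}

section CommSemiring

variable [CommSemiring R]

section

variable {A : Type*} [Semiring A] [Algebra R A]

open scoped IsMulCommutative in
def aevalOfCommute (v : ι → A) (hv : ∀ i j, Commute (v i) (v j)) : MvPolynomial ι R →ₐ[R] A :=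
  haveI := Algebra.isMulCommutative_adjoin R (s := Set.range v)
    (by rintro _ ⟨i, rfl⟩ _ ⟨j, rfl⟩; exact hv i j)
  (Algebra.adjoin R (Set.range v)).val.comp (aeval fun i => ⟨v i, Algebra.subset_adjoin ⟨i, rfl⟩⟩)

@[simp]
lemma aevalOfCommute_X (v : ι → A) (hv : ∀ i j, Commute (v i) (v j)) (i : ι) :
    aevalOfCommute (R := R) v hv (X i) = v i := by
  simp [aevalOfCommute]

lemma surjective_of_forall_X_mem_range (φ : A →ₐ[R] MvPolynomial ι R) (h : ∀ i, X i ∈ φ.range) :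
    Function.Surjective φ := by
  rw [← AlgHom.range_eq_top, eq_top_iff, ← adjoin_range_X, Algebra.adjoin_le_iff]
  rintro _ ⟨i, rfl⟩
  exact h i

end

lemma iterate_pderiv_monomial (a : ι) (b : ℕ) (β : ι →₀ ℕ) (r : R) :
    (pderiv a)^[b] (monomial β r) =
      monomial (β - Finsupp.single a b) (r * (β a).descFactorial b) := by
  classical
  induction b with
  | zero => simp
  | succ b ih =>
    rw [Function.iterate_succ_apply', ih, pderiv_monomial, tsub_tsub, ← Finsupp.single_add,
      Nat.descFactorial_succ]
    simp only [Finsupp.tsub_apply, Finsupp.single_eq_same, Nat.cast_mul]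
    congr 1
    ring

lemma derivation_apply_eq_sum [Fintype ι]
    (D : Derivation R (MvPolynomial ι R) (MvPolynomial ι R)) (p : MvPolynomial ι R) :
    D p = ∑ k, D (X k) * pderiv k p := by
  have : D = ∑ k, D (X k) • pderiv k := by
    classical
    refine derivation_ext fun i => ?_
    simp [Derivation.finset_sum_apply, pderiv_X, Pi.single_apply]
  conv_lhs => rw [this]
  simp [Derivation.finset_sum_apply]

def jacobianMatrix (f : ι → MvPolynomial ι R) : Matrix ι ι (MvPolynomial ι R) :=
  Matrix.of fun i j => pderiv j (f i)

end CommSemiring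

variable [CommRing R]

lemma lie_pderiv (i j : ι) :
    ⁅pderiv (R := R) i, pderiv j⁆ = (0 : Derivation R (MvPolynomial ι R) (MvPolynomial ι R)) := by
  classical
  refine derivation_ext fun k => ?_
  simp [Derivation.commutator_apply, pderiv_X, Pi.single_apply, apply_ite]

lemma pderiv_comm (i j : ι) (p : MvPolynomial ι R) :
    pderiv i (pderiv j p) = pderiv j (pderiv i p) := by
  simpa [Derivation.commutator_apply, sub_eq_zero] using congr($(lie_pderiv (R := R) i j) p)

variable [Fintype ι] [DecidableEq ι] {f : ι → MvPolynomial ι R}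

lemma derivation_eq_zero_of_isUnit_det (hf : IsUnit (jacobianMatrix f).det)
    {D : Derivation R (MvPolynomial ι R) (MvPolynomial ι R)} (hD : ∀ m, D (f m) = 0) : D = 0 := by
  have hmulVec : (jacobianMatrix f).mulVec (fun k => D (X k)) = (jacobianMatrix f).mulVec 0 := by
    ext m
    rw [Matrix.mulVec_zero, Pi.zero_apply, ← hD m, derivation_apply_eq_sum]
    simp [Matrix.mulVec, dotProduct, jacobianMatrix, mul_comm]
  have hX := Matrix.mulVec_injective_of_isUnit ((Matrix.isUnit_iff_isUnit_det _).2 hf) hmulVec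
  exact derivation_ext fun k => congr_fun hX k

variable (f) in
def dualDerivation (i : ι) : Derivation R (MvPolynomial ι R) (MvPolynomial ι R) :=
  ∑ k, (jacobianMatrix f)⁻¹ k i • pderiv k

lemma dualDerivation_apply (hf : IsUnit (jacobianMatrix f).det) (i j : ι) :
    dualDerivation f i (f j) = if i = j then 1 else 0 := by
  have h := congr_fun₂ (Matrix.mul_nonsing_inv _ hf) j i
  rw [Matrix.mul_apply, Matrix.one_apply] at h
  simp only [dualDerivation, Derivation.finset_sum_apply, Derivation.smul_apply, smul_eq_mul]
  simp_rw [eq_comm (a := i), ← h, jacobianMatrix, Matrix.of_apply, mul_comm]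

lemma lie_dualDerivation (hf : IsUnit (jacobianMatrix f).det) (i j : ι) :
    ⁅dualDerivation f i, dualDerivation f j⁆ = 0 :=
  derivation_eq_zero_of_isUnit_det hf fun m => by
    simp [Derivation.commutator_apply, dualDerivation_apply hf, apply_ite]

end MvPolynomial

namespace WeylN

variable (K : Type*) [Field K] (n : ℕ)

def t (i : Fin n) : WeylN K n := RingQuot.mkAlgHom K _ (FreeAlgebra.ι K (Sum.inl i))

def x (i : Fin n) : WeylN K n := RingQuot.mkAlgHom K _ (FreeAlgebra.ι K (Sum.inr i))

variable {K n}

lemma x_mul_t (i j : Fin n) : x K n i * t K n j = t K n j * x K n i + if i = j then 1 else 0 := by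
  simpa [t, x, apply_ite] using
    RingQuot.mkAlgHom_rel K (s := weylNRel K n) (Or.inl ⟨i, j, rfl, rfl⟩)

lemma commute_x (i j : Fin n) : Commute (x K n i) (x K n j) := by
  have h := RingQuot.mkAlgHom_rel K (s := weylNRel K n) (Or.inr (Or.inl ⟨i, j, rfl, rfl⟩))
  rw [map_mul, map_mul] at h
  exact h

lemma commute_t (i j : Fin n) : Commute (t K n i) (t K n j) := by
  have h := RingQuot.mkAlgHom_rel K (s := weylNRel K n) (Or.inr (Or.inr ⟨i, j, rfl, rfl⟩))
  rw [map_mul, map_mul] at h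
  exact h

section Lift

variable {A : Type*} [Ring A] [Algebra K A] (u v : Fin n → A)
  (huv : ∀ i j, v i * u j = u j * v i + if i = j then 1 else 0)
  (hv : ∀ i j, Commute (v i) (v j)) (hu : ∀ i j, Commute (u i) (u j))

def lift : WeylN K n →ₐ[K] A :=
  RingQuot.liftAlgHom K ⟨FreeAlgebra.lift K (Sum.elim u v), by
    rintro a b (⟨i, j, rfl, rfl⟩ | ⟨i, j, rfl, rfl⟩ | ⟨i, j, rfl, rfl⟩) <;>
      simp only [map_mul, map_add, FreeAlgebra.lift_ι_apply, Sum.elim_inl, Sum.elim_inr,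
        apply_ite (FreeAlgebra.lift K _), map_one, map_zero]
    exacts [huv i j, (hv i j).eq, (hu i j).eq]⟩

@[simp]
lemma lift_t (j : Fin n) : lift u v huv hv hu (t K n j) = u j := by
  simp [lift, t]

@[simp]
lemma lift_x (i : Fin n) : lift u v huv hv hu (x K n i) = v i := by
  simp [lift, x]

end Lift

variable (K n) in
def polyT : MvPolynomial (Fin n) K →ₐ[K] WeylN K n := aevalOfCommute (t K n) commute_t

variable (K n) in
def polyX : MvPolynomial (Fin n) K →ₐ[K] WeylN K n := aevalOfCommute (x K n) commute_x

@[simp]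
lemma polyT_X (i : Fin n) : polyT K n (X i) = t K n i := aevalOfCommute_X _ _ i

@[simp]
lemma polyX_X (i : Fin n) : polyX K n (X i) = x K n i := aevalOfCommute_X _ _ i

lemma commute_polyT (p q : MvPolynomial (Fin n) K) : Commute (polyT K n p) (polyT K n q) :=
  (Commute.all p q).map _

lemma x_mul_polyT (k : Fin n) (p : MvPolynomial (Fin n) K) :
    x K n k * polyT K n p = polyT K n p * x K n k + polyT K n (pderiv k p) := by
  induction p using MvPolynomial.induction_on with
  | C a => simp [← algebraMap_eq, Algebra.commutes]
  | add p q hp hq =>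
    rw [map_add, mul_add, hp, hq, map_add, map_add, add_mul]
    abel
  | mul_X p i hp =>
    have hd : pderiv k (p * X i) = pderiv k p * X i + if k = i then p else 0 := by
      rw [pderiv_mul, pderiv_X, Pi.single_apply]
      simp [eq_comm]
    rw [map_mul, polyT_X, ← mul_assoc, hp, add_mul, mul_assoc, x_mul_t, hd]
    simp only [map_add, map_mul, polyT_X, apply_ite (polyT K n), map_zero, mul_add, mul_ite,
      mul_one, mul_zero, mul_assoc]
    abel

variable (K n) in
def rep : WeylN K n →ₐ[K] Module.End K (MvPolynomial (Fin n) K) :=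
  lift (fun j => Algebra.lmul K _ (X j)) (fun i => (pderiv i).toLinearMap)
    (fun i j => LinearMap.ext fun p => by
      rcases eq_or_ne i j with rfl | hij
      · simp [add_comm]
      · simp [hij, pderiv_X_of_ne hij.symm])
    (fun i j => LinearMap.ext fun p => pderiv_comm i j p)
    (fun i j => LinearMap.ext fun p => mul_left_comm _ _ p)

@[simp]
lemma rep_t (j : Fin n) : rep K n (t K n j) = Algebra.lmul K _ (X j) := lift_t ..

@[simp]
lemma rep_x (i : Fin n) : rep K n (x K n i) = (pderiv i).toLinearMap := lift_x ..

lemma rep_polyT (p : MvPolynomial (Fin n) K) :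
    rep K n (polyT K n p) = Algebra.lmul K (MvPolynomial (Fin n) K) p := by
  have : (rep K n).comp (polyT K n) = Algebra.lmul K (MvPolynomial (Fin n) K) :=
    algHom_ext fun i => by simp
  exact congr($this p)

lemma polyT_injective : Function.Injective (polyT K n) := fun p q h => by
  simpa [rep_polyT] using congr(rep K n $h 1)

variable (K n) in
def xPow (β : Fin n →₀ ℕ) : WeylN K n := polyX K n (monomial β 1)

@[simp]
lemma xPow_zero : xPow K n 0 = 1 := by
  simp [xPow, monomial_zero']

lemma xPow_add (β γ : Fin n →₀ ℕ) : xPow K n (β + γ) = xPow K n β * xPow K n γ := by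
  rw [xPow, xPow, xPow, ← map_mul, monomial_mul, one_mul]

lemma xPow_single (a : Fin n) (b : ℕ) : xPow K n (Finsupp.single a b) = x K n a ^ b := by
  rw [xPow, ← X_pow_eq_monomial, map_pow, polyX_X]

lemma x_mul_xPow (k : Fin n) (β : Fin n →₀ ℕ) :
    x K n k * xPow K n β = xPow K n (Finsupp.single k 1 + β) := by
  rw [xPow_add, xPow_single, pow_one]

lemma rep_xPow_monomial (γ β : Fin n →₀ ℕ) :
    rep K n (xPow K n γ) (monomial β 1) =
      monomial (β - γ) ((γ.prod fun a e => (β a).descFactorial e : ℕ) : K) := by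
  induction γ using Finsupp.induction with
  | zero => simp
  | single_add a b f ha hb ih =>
    have hfa : f a = 0 := Finsupp.notMem_support_iff.mp ha
    have hprod : ((Finsupp.single a b + f).prod fun a e => (β a).descFactorial e) =
        (β a).descFactorial b * f.prod fun a e => (β a).descFactorial e := by
      rw [Finsupp.prod, Finsupp.support_single_add ha hb, Finset.prod_cons, Finsupp.prod]
      congr 1
      · simp [hfa]
      · refine Finset.prod_congr rfl fun c hc => ?_
        simp [show a ≠ c from fun h => ha (h ▸ hc)]
    have hsub : β - f - Finsupp.single a b = β - (Finsupp.single a b + f) := by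
      rw [tsub_tsub, add_comm]
    rw [xPow_add, map_mul, Module.End.mul_apply, ih, xPow_single, map_pow, rep_x,
      Module.End.coe_pow, Derivation.coeFn_coe, iterate_pderiv_monomial, hsub, hprod,
      Finsupp.tsub_apply, hfa, Nat.sub_zero, Nat.cast_mul, mul_comm]

variable (K n) in
def normalForm : ((Fin n →₀ ℕ) →₀ MvPolynomial (Fin n) K) →ₗ[K] WeylN K n :=
  Finsupp.lsum K fun β => (LinearMap.mulRight K (xPow K n β)).comp (polyT K n).toLinearMap

lemma normalForm_apply (c : (Fin n →₀ ℕ) →₀ MvPolynomial (Fin n) K) :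
    normalForm K n c = c.sum fun β p => polyT K n p * xPow K n β :=
  rfl

@[simp]
lemma normalForm_single (β : Fin n →₀ ℕ) (p : MvPolynomial (Fin n) K) :
    normalForm K n (Finsupp.single β p) = polyT K n p * xPow K n β := by
  simp [normalForm_apply]

lemma mul_normalForm_mem_range_of_single {a : WeylN K n}
    (h : ∀ β p, a * normalForm K n (Finsupp.single β p) ∈ LinearMap.range (normalForm K n))
    (c : (Fin n →₀ ℕ) →₀ MvPolynomial (Fin n) K) :
    a * normalForm K n c ∈ LinearMap.range (normalForm K n) := by
  induction c using Finsupp.induction_linear with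
  | zero => simp
  | add c₁ c₂ h₁ h₂ => simpa [mul_add] using add_mem h₁ h₂
  | single β p => exact h β p

lemma mul_normalForm_mem_range (w : WeylN K n) (c : (Fin n →₀ ℕ) →₀ MvPolynomial (Fin n) K) :
    w * normalForm K n c ∈ LinearMap.range (normalForm K n) := by
  obtain ⟨a, rfl⟩ := RingQuot.mkAlgHom_surjective K (weylNRel K n) w
  induction a using FreeAlgebra.induction generalizing c with
  | grade0 r =>
    rw [AlgHom.commutes, ← Algebra.smul_def]
    exact Submodule.smul_mem _ r (LinearMap.mem_range_self _ c)
  | grade1 g =>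
    refine mul_normalForm_mem_range_of_single (fun β p => ?_) c
    rcases g with k | k
    · refine ⟨Finsupp.single β (X k * p), ?_⟩
      rw [normalForm_single, normalForm_single, map_mul, polyT_X, mul_assoc]
      rfl
    · refine ⟨Finsupp.single (Finsupp.single k 1 + β) p + Finsupp.single β (pderiv k p), ?_⟩
      rw [map_add, normalForm_single, normalForm_single, normalForm_single, ← mul_assoc,
        show RingQuot.mkAlgHom K (weylNRel K n) (FreeAlgebra.ι K (Sum.inr k)) = x K n k from rfl,
        x_mul_polyT, add_mul, mul_assoc, x_mul_xPow]
  | mul a b ha hb =>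
    obtain ⟨c', hc'⟩ := hb c
    rw [map_mul, mul_assoc, ← hc']
    exact ha c'
  | add a b ha hb => simpa [add_mul] using add_mem (ha c) (hb c)

lemma normalForm_surjective : Function.Surjective (normalForm K n) := fun w => by
  simpa using mul_normalForm_mem_range w (Finsupp.single 0 1)

lemma rep_normalForm_apply (c : (Fin n →₀ ℕ) →₀ MvPolynomial (Fin n) K)
    (q : MvPolynomial (Fin n) K) :
    rep K n (normalForm K n c) q = c.sum fun γ p => p * rep K n (xPow K n γ) q := by
  simp [normalForm_apply, map_finsuppSum, LinearMap.finsupp_sum_apply, rep_polyT]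

lemma commute_polyT_of_forall_commute_t {w : WeylN K n} (hw : ∀ j, Commute w (t K n j))
    (p : MvPolynomial (Fin n) K) : Commute w (polyT K n p) := by
  induction p using MvPolynomial.induction_on with
  | C a => simpa [← algebraMap_eq] using Algebra.commute_algebraMap_right a w
  | add p q hp hq => simpa using hp.add_right hq
  | mul_X p i hp => simpa using hp.mul_right (hw i)

def ofDerivation (D : Derivation K (MvPolynomial (Fin n) K) (MvPolynomial (Fin n) K)) :
    WeylN K n :=
  ∑ k, polyT K n (D (X k)) * x K n k

lemma ofDerivation_mul_polyT (D : Derivation K (MvPolynomial (Fin n) K) (MvPolynomial (Fin n) K))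
    (p : MvPolynomial (Fin n) K) :
    ofDerivation D * polyT K n p = polyT K n p * ofDerivation D + polyT K n (D p) := by
  rw [ofDerivation, Finset.sum_mul, Finset.mul_sum, derivation_apply_eq_sum D p, map_sum,
    ← Finset.sum_add_distrib]
  refine Finset.sum_congr rfl fun k _ => ?_
  rw [mul_assoc, x_mul_polyT, mul_add, ← mul_assoc, (commute_polyT _ _).eq, mul_assoc, map_mul]

lemma ofDerivation_mul_ofDerivation
    (D E : Derivation K (MvPolynomial (Fin n) K) (MvPolynomial (Fin n) K)) :
    ofDerivation D * ofDerivation E =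
      (∑ k, ∑ l, polyT K n (D (X k) * E (X l)) * (x K n k * x K n l)) +
        ∑ l, polyT K n (D (E (X l))) * x K n l := by
  have hE : ofDerivation E = ∑ l, polyT K n (E (X l)) * x K n l := rfl
  calc ofDerivation D * ofDerivation E
      = ∑ l, (polyT K n (E (X l)) * ofDerivation D + polyT K n (D (E (X l)))) * x K n l := by
        simp only [hE, Finset.mul_sum, ← mul_assoc, ofDerivation_mul_polyT]
    _ = _ := by
        simp only [add_mul, Finset.sum_add_distrib, ofDerivation, Finset.mul_sum, Finset.sum_mul]
        rw [Finset.sum_comm]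
        refine congrArg (· + _) (Finset.sum_congr rfl fun k _ => Finset.sum_congr rfl fun l _ => ?_)
        rw [map_mul, (commute_polyT (D (X k)) (E (X l))).eq]
        simp only [mul_assoc]

lemma ofDerivation_lie (D E : Derivation K (MvPolynomial (Fin n) K) (MvPolynomial (Fin n) K)) :
    ofDerivation ⁅D, E⁆ = ofDerivation D * ofDerivation E - ofDerivation E * ofDerivation D := by
  have hsymm : (∑ k, ∑ l, polyT K n (E (X k) * D (X l)) * (x K n k * x K n l)) =
      ∑ k, ∑ l, polyT K n (D (X k) * E (X l)) * (x K n k * x K n l) := by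
    rw [Finset.sum_comm]
    simp only [mul_comm (E _), (commute_x _ _).eq]
  rw [ofDerivation_mul_ofDerivation, ofDerivation_mul_ofDerivation, hsymm, add_sub_add_left_eq_sub,
    ← Finset.sum_sub_distrib, ofDerivation]
  simp [Derivation.commutator_apply, sub_mul]

lemma commute_ofDerivation {D E : Derivation K (MvPolynomial (Fin n) K) (MvPolynomial (Fin n) K)}
    (h : ⁅D, E⁆ = 0) : Commute (ofDerivation D) (ofDerivation E) := by
  rw [Commute, SemiconjBy, ← sub_eq_zero, ← ofDerivation_lie, h]
  simp [ofDerivation]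

section Extend

variable {σ : MvPolynomial (Fin n) K →ₐ[K] MvPolynomial (Fin n) K}

variable (σ) in
def extend (hσ : IsUnit (jacobianMatrix fun i => σ (X i)).det) : WeylN K n →ₐ[K] WeylN K n :=
  lift (fun j => polyT K n (σ (X j)))
    (fun i => ofDerivation (dualDerivation (fun j => σ (X j)) i))
    (fun i j => by
      rw [ofDerivation_mul_polyT, dualDerivation_apply hσ, apply_ite (polyT K n), map_one,
        map_zero])
    (fun i j => commute_ofDerivation (lie_dualDerivation hσ i j))
    (fun i j => commute_polyT _ _)

lemma extend_polyT (hσ : IsUnit (jacobianMatrix fun i => σ (X i)).det)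
    (p : MvPolynomial (Fin n) K) : extend σ hσ (polyT K n p) = polyT K n (σ p) := by
  have : (extend σ hσ).comp (polyT K n) = (polyT K n).comp σ :=
    algHom_ext fun i => by simp [extend]
  exact congr($this p)

end Extend

variable [CharZero K]

/-- Apply the operator to `t^β` for a minimal `β` in the support of `c`: all other terms
`c_γ ∂^γ t^β` vanish and the `β`-term is `β! c_β`. -/
lemma eq_zero_of_rep_normalForm_eq_zero {c : (Fin n →₀ ℕ) →₀ MvPolynomial (Fin n) K}
    (h : rep K n (normalForm K n c) = 0) : c = 0 := by
  by_contra hc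
  obtain ⟨β, hβc, hβmin⟩ := Finset.exists_minimal (Finsupp.support_nonempty_iff.mpr hc)
  have h0 := congr($h (monomial β 1))
  rw [rep_normalForm_apply, Finsupp.sum, Finset.sum_eq_single β] at h0
  · rw [LinearMap.zero_apply, rep_xPow_monomial, tsub_self, monomial_zero', mul_eq_zero,
      C_eq_zero, Nat.cast_eq_zero, Finsupp.prod_descFactorial_eq_zero_iff] at h0
    exact h0.elim (Finsupp.mem_support_iff.mp hβc) (· le_rfl)
  · intro γ hγ hγβ
    have : ¬ γ ≤ β := fun hle => hγβ (le_antisymm hle (hβmin hγ hle))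
    rw [rep_xPow_monomial, (Finsupp.prod_descFactorial_eq_zero_iff γ β).2 this]
    simp
  · exact fun h => absurd hβc h

lemma rep_injective : Function.Injective (rep K n) := by
  refine (injective_iff_map_eq_zero _).2 fun w hw => ?_
  obtain ⟨c, rfl⟩ := normalForm_surjective w
  rw [eq_zero_of_rep_normalForm_eq_zero hw, map_zero]

lemma mem_range_polyT_of_forall_commute_t {w : WeylN K n} (hw : ∀ j, Commute w (t K n j)) :
    w ∈ (polyT K n).range := by
  refine ⟨rep K n w 1, rep_injective (LinearMap.ext fun r => ?_)⟩
  have hc := ((commute_polyT_of_forall_commute_t hw r).map (rep K n)).eq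
  simpa [rep_polyT, mul_comm] using (LinearMap.congr_fun hc 1).symm

lemma bijective_of_bijective_extend {σ : MvPolynomial (Fin n) K →ₐ[K] MvPolynomial (Fin n) K}
    (hσ : IsUnit (jacobianMatrix fun i => σ (X i)).det) (h : Function.Bijective (extend σ hσ)) :
    Function.Bijective σ := by
  refine ⟨fun p q hpq => polyT_injective (h.1 (by rw [extend_polyT, extend_polyT, hpq])),
    surjective_of_forall_X_mem_range σ fun i => ?_⟩
  obtain ⟨w, hw⟩ := h.2 (t K n i)
  have hcomm (j : Fin n) : Commute w (t K n j) := by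
    refine Commute.of_map h.1 ?_
    rw [hw, ← polyT_X j, extend_polyT, ← polyT_X i]
    exact commute_polyT _ _
  obtain ⟨p, rfl⟩ := (AlgHom.mem_range _).1 (mem_range_polyT_of_forall_commute_t hcomm)
  exact (AlgHom.mem_range σ).2 ⟨p, polyT_injective (by rw [← extend_polyT hσ, hw, polyT_X])⟩

end WeylN

end

theorem weylN_dixmier_implies_jacobian_general (K : Type*) [Field K] [CharZero K]
    (n : ℕ)
    (hD : ∀ Φ : WeylN K n →ₐ[K] WeylN K n, Function.Bijective Φ) :
    ∀ σ : MvPolynomial (Fin n) K →ₐ[K] MvPolynomial (Fin n) K,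
      (∃ c : K, c ≠ 0 ∧
        (Matrix.of fun i j : Fin n =>
            MvPolynomial.pderiv j (σ (MvPolynomial.X i))).det = MvPolynomial.C c) →
      Function.Bijective σ := by
  rintro σ ⟨c, hc, hdet⟩
  have hσ : IsUnit (jacobianMatrix fun i => σ (X i)).det := by
    rw [jacobianMatrix, hdet]
    exact (Ne.isUnit hc).map C
  exact WeylN.bijective_of_bijective_extend hσ (hD _)

/-- If every `K`-algebra endomorphism of the `n`-th Weyl algebra
`Aₙ(K)` is bijective, then the Jacobian conjecture holds in `n` variables over `K`:
every endomorphism of `K[t₁, …, tₙ]` whose Jacobian determinant is a nonzero constant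
is bijective. -/
theorem weylN_dixmier_implies_jacobian (K : Type*) [Field K] [CharZero K]
    (n : ℕ) (hn : 1 ≤ n)
    (hD : ∀ Φ : WeylN K n →ₐ[K] WeylN K n, Function.Bijective Φ) :
    ∀ σ : MvPolynomial (Fin n) K →ₐ[K] MvPolynomial (Fin n) K,
      (∃ c : K, c ≠ 0 ∧
        (Matrix.of fun i j : Fin n =>
            MvPolynomial.pderiv j (σ (MvPolynomial.X i))).det = MvPolynomial.C c) →
      Function.Bijective σ :=
  weylN_dixmier_implies_jacobian_general K n hD
end

section
/- Let p = p_0(t) + p_1(t)·x and q = q_0(t) + q_1(t)·x be elements of A_1(K), where p_0, p_1, q_0, q_1 ∈ K[X]. Then q·p = p·q + 1 in A_1(K) if and only if the identities q_1·p_0′ − p_1·q_0′ = 1 and q_1·p_1′ − p_1·q_1′ = 0 hold in K[X], where ′ denotes the formal derivative. -/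
/-- The defining relation of the first Weyl algebra `A₁(K)`: `x·t = t·x + 1`, where
`t` is the image of the generator `0` and `x` is the image of the generator `1`. -/
def weylRel (K : Type*) [Field K] :
    FreeAlgebra K (Fin 2) → FreeAlgebra K (Fin 2) → Prop := fun a b =>
  a = FreeAlgebra.ι K (1 : Fin 2) * FreeAlgebra.ι K (0 : Fin 2) ∧
  b = FreeAlgebra.ι K (0 : Fin 2) * FreeAlgebra.ι K (1 : Fin 2) + 1

/-- The first Weyl algebra `A₁(K)`: the quotient of the free algebra on two generators
`t, x` by the two-sided ideal generated by `x·t − t·x − 1`. -/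
abbrev Weyl (K : Type*) [Field K] : Type _ := RingQuot (weylRel K)

/-- The generator `t` of the first Weyl algebra. -/
noncomputable def wT (K : Type*) [Field K] : Weyl K :=
  RingQuot.mkAlgHom K (weylRel K) (FreeAlgebra.ι K (0 : Fin 2))

/-- The generator `x` of the first Weyl algebra. -/
noncomputable def wX (K : Type*) [Field K] : Weyl K :=
  RingQuot.mkAlgHom K (weylRel K) (FreeAlgebra.ι K (1 : Fin 2))

/-!
The Weyl algebra acts faithfully enough on `K[X]` (with `t` acting as multiplication by `X`
and `x` as `d/dX`) to read off both coefficients of an element `a(t) + b(t)·x`: applied to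
`1` and to `X` it gives `a` and `a·X + b`. On the other hand, pushing `x` past `f(t)` via
`x·f(t) = f(t)·x + f′(t)` shows that the commutator `q·p − p·q` of two elements linear in `x`
is again linear in `x`, with coefficients `q₁p₀′ − p₁q₀′` and `q₁p₁′ − p₁q₁′`.
-/

open Polynomial

noncomputable section

variable (K : Type*) [Field K]

def weylPolyRep : Weyl K →ₐ[K] Module.End K K[X] :=
  RingQuot.liftAlgHom K ⟨FreeAlgebra.lift K ![Algebra.lmul K K[X] X, derivative], by
    rintro _ _ ⟨rfl, rfl⟩
    refine LinearMap.ext fun f => ?_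
    simp [derivative_mul, add_comm]⟩

theorem weylPolyRep_aeval_wT (f : K[X]) :
    weylPolyRep K (aeval (wT K) f) = Algebra.lmul K K[X] f := by
  rw [← aeval_algHom_apply, weylPolyRep, wT, RingQuot.liftAlgHom_mkAlgHom_apply,
    FreeAlgebra.lift_ι_apply, Matrix.cons_val_zero, aeval_algHom_apply, aeval_X_left_apply]

theorem weylPolyRep_wX : weylPolyRep K (wX K) = derivative := by
  rw [weylPolyRep, wX, RingQuot.liftAlgHom_mkAlgHom_apply, FreeAlgebra.lift_ι_apply]
  rfl

theorem wX_mul_wT : wX K * wT K = wT K * wX K + 1 := by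
  simpa [wX, wT] using RingQuot.mkAlgHom_rel K (s := weylRel K) ⟨rfl, rfl⟩

theorem wX_mul_aeval_wT (f : K[X]) :
    wX K * aeval (wT K) f = aeval (wT K) f * wX K + aeval (wT K) (derivative f) := by
  have hf : f ∈ Algebra.adjoin K {X} := adjoin_X (R := K) ▸ Algebra.mem_top
  induction hf using Algebra.adjoin_induction with
  | mem f hX => simp [Set.mem_singleton_iff.mp hX, wX_mul_wT]
  | algebraMap r => simp [Algebra.commutes]
  | add f g _ _ hf hg =>
    simp only [map_add, mul_add, add_mul, hf, hg]
    abel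
  | mul f g _ _ hf hg =>
    simp only [map_mul, derivative_mul, map_add, ← mul_assoc, hf]
    rw [add_mul, mul_assoc _ (wX K), hg]
    noncomm_ring

def linearInX (a b : K[X]) : Weyl K := aeval (wT K) a + aeval (wT K) b * wX K

variable {K}

theorem linearInX_add (a b c d : K[X]) :
    linearInX K a b + linearInX K c d = linearInX K (a + c) (b + d) := by
  simp only [linearInX, map_add, add_mul]
  abel

theorem linearInX_mul_linearInX (a₀ a₁ b₀ b₁ : K[X]) :
    linearInX K a₀ a₁ * linearInX K b₀ b₁ =
      linearInX K (a₀ * b₀ + a₁ * derivative b₀) (a₀ * b₁ + a₁ * b₀ + a₁ * derivative b₁) +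
        aeval (wT K) (a₁ * b₁) * wX K ^ 2 := by
  have h₀ : aeval (wT K) a₁ * wX K * aeval (wT K) b₀ =
      aeval (wT K) a₁ * (aeval (wT K) b₀ * wX K + aeval (wT K) (derivative b₀)) := by
    rw [mul_assoc, wX_mul_aeval_wT]
  have h₁ : aeval (wT K) a₁ * wX K * (aeval (wT K) b₁ * wX K) =
      aeval (wT K) a₁ * ((aeval (wT K) b₁ * wX K + aeval (wT K) (derivative b₁)) * wX K) := by
    rw [mul_assoc, ← mul_assoc (wX K), wX_mul_aeval_wT]
  simp only [linearInX, map_add, map_mul, add_mul, mul_add, h₀, h₁]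
  noncomm_ring

theorem linearInX_mul_linearInX_comm (p₀ p₁ q₀ q₁ : K[X]) :
    linearInX K q₀ q₁ * linearInX K p₀ p₁ = linearInX K p₀ p₁ * linearInX K q₀ q₁ +
      linearInX K (q₁ * derivative p₀ - p₁ * derivative q₀)
        (q₁ * derivative p₁ - p₁ * derivative q₁) := by
  rw [linearInX_mul_linearInX, linearInX_mul_linearInX, mul_comm q₁ p₁,
    add_right_comm _ (aeval (wT K) (p₁ * q₁) * wX K ^ 2), linearInX_add]
  congr 2 <;> ring

theorem weylPolyRep_linearInX_apply (a b g : K[X]) :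
    weylPolyRep K (linearInX K a b) g = a * g + b * derivative g := by
  simp [linearInX, weylPolyRep_aeval_wT, weylPolyRep_wX]

theorem linearInX_inj {a b c d : K[X]} :
    linearInX K a b = linearInX K c d ↔ a = c ∧ b = d := by
  refine ⟨fun h => ?_, fun ⟨hac, hbd⟩ => hac ▸ hbd ▸ rfl⟩
  have hac : a = c := by
    simpa [weylPolyRep_linearInX_apply] using congr(weylPolyRep K $h (1 : K[X]))
  subst hac
  simpa [weylPolyRep_linearInX_apply] using congr(weylPolyRep K $h (X : K[X]))

theorem linearInX_one_zero : linearInX K 1 0 = 1 := by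
  simp [linearInX]

end

theorem weyl_linear_dixmier_iff_general (K : Type*) [Field K]
    (p0 p1 q0 q1 : Polynomial K) :
    (Polynomial.aeval (wT K) q0 + Polynomial.aeval (wT K) q1 * wX K) *
        (Polynomial.aeval (wT K) p0 + Polynomial.aeval (wT K) p1 * wX K) =
      (Polynomial.aeval (wT K) p0 + Polynomial.aeval (wT K) p1 * wX K) *
        (Polynomial.aeval (wT K) q0 + Polynomial.aeval (wT K) q1 * wX K) + 1 ↔
    (q1 * Polynomial.derivative p0 - p1 * Polynomial.derivative q0 = 1 ∧
     q1 * Polynomial.derivative p1 - p1 * Polynomial.derivative q1 = 0) := by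
  change linearInX K q0 q1 * linearInX K p0 p1 = linearInX K p0 p1 * linearInX K q0 q1 + 1 ↔ _
  rw [linearInX_mul_linearInX_comm, add_right_inj, ← linearInX_one_zero, linearInX_inj]

/-- For `p = p₀(t) + p₁(t)·x` and `q = q₀(t) + q₁(t)·x` in `A₁(K)`,
the relation `q·p = p·q + 1` holds if and only if `q₁·p₀′ − p₁·q₀′ = 1` and
`q₁·p₁′ − p₁·q₁′ = 0` in `K[X]`. -/
theorem weyl_linear_dixmier_iff (K : Type*) [Field K] [CharZero K]
    (p0 p1 q0 q1 : Polynomial K) :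
    (Polynomial.aeval (wT K) q0 + Polynomial.aeval (wT K) q1 * wX K) *
        (Polynomial.aeval (wT K) p0 + Polynomial.aeval (wT K) p1 * wX K) =
      (Polynomial.aeval (wT K) p0 + Polynomial.aeval (wT K) p1 * wX K) *
        (Polynomial.aeval (wT K) q0 + Polynomial.aeval (wT K) q1 * wX K) + 1 ↔
    (q1 * Polynomial.derivative p0 - p1 * Polynomial.derivative q0 = 1 ∧
     q1 * Polynomial.derivative p1 - p1 * Polynomial.derivative q1 = 0) :=
  weyl_linear_dixmier_iff_general K p0 p1 q0 q1
end

section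
/- Let a, b, c, d ∈ K and set p := b·t + a·x and q := d·t + c·x in A_1(K). If q·p = p·q + 1 (equivalently, b·c − a·d = 1), then there exists a K-algebra endomorphism α of A_1(K) with α(t) = p and α(x) = q, and every K-algebra endomorphism α of A_1(K) with α(t) = p and α(x) = q is bijective. -/
/-!
An endomorphism of `A₁(K)` is determined by the images of `t` and `x`, and any pair `p, q`
with `q·p = p·q + 1` is such a pair of images. For `p = b·t + a·x`, `q = d·t + c·x` one has
`q·p − p·q = (b·c − a·d)·1`, so the hypothesis says the matrix `[[b, a], [d, c]]` has determinant
one. Its adjugate then satisfies the same relation, and the endomorphism it defines is a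
two-sided inverse of `α`.
-/

theorem linear_mul_linear_of_mul_eq_add_one {R A : Type*} [CommRing R] [Ring A] [Algebra R A]
    {t x : A} (hxt : x * t = t * x + 1) (a b c d : R) :
    (d • t + c • x) * (b • t + a • x) =
      (b • t + a • x) * (d • t + c • x) + (c * b - a * d) • (1 : A) := by
  simp only [add_mul, mul_add, smul_mul_smul_comm, hxt, smul_add]
  module

namespace Weyl

variable {K : Type*} [Field K]

theorem wX_mul_wT : wX K * wT K = wT K * wX K + 1 := by
  simpa only [wT, wX, map_mul, map_add, map_one] using
    RingQuot.mkAlgHom_rel K (s := weylRel K) ⟨rfl, rfl⟩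

theorem exists_algHom {A : Type*} [Semiring A] [Algebra K A] (p q : A)
    (h : q * p = p * q + 1) :
    ∃ α : Weyl K →ₐ[K] A, α (wT K) = p ∧ α (wX K) = q := by
  have hrel : ∀ ⦃u v⦄, weylRel K u v →
      FreeAlgebra.lift K ![p, q] u = FreeAlgebra.lift K ![p, q] v := by
    rintro u v ⟨rfl, rfl⟩
    simp [h]
  exact ⟨RingQuot.liftAlgHom K ⟨FreeAlgebra.lift K ![p, q], hrel⟩,
    by simp [wT], by simp [wX]⟩

theorem algHom_ext {A : Type*} [Semiring A] [Algebra K A] {f g : Weyl K →ₐ[K] A}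
    (ht : f (wT K) = g (wT K)) (hx : f (wX K) = g (wX K)) : f = g := by
  refine RingQuot.ringQuot_ext' K f g (FreeAlgebra.hom_ext (funext fun i => ?_))
  fin_cases i
  · exact ht
  · exact hx

end Weyl

theorem weyl_linear_endo_bijective_general (K : Type*) [Field K] (a b c d : K)
    (h : (d • wT K + c • wX K) * (b • wT K + a • wX K) =
      (b • wT K + a • wX K) * (d • wT K + c • wX K) + 1) :
    (∃ α : Weyl K →ₐ[K] Weyl K,
      α (wT K) = b • wT K + a • wX K ∧ α (wX K) = d • wT K + c • wX K) ∧
    (∀ α : Weyl K →ₐ[K] Weyl K,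
      α (wT K) = b • wT K + a • wX K → α (wX K) = d • wT K + c • wX K →
      Function.Bijective α) := by
  have hcomm (a b c d : K) :=
    linear_mul_linear_of_mul_eq_add_one (Weyl.wX_mul_wT (K := K)) a b c d
  have hdet : (c * b - a * d) • (1 : Weyl K) = 1 :=
    add_left_cancel ((hcomm a b c d).symm.trans h)
  have hdet_smul (z : Weyl K) : (c * b - a * d) • z = z := by
    rw [← smul_one_mul, hdet, one_mul]
  obtain ⟨β, hβt, hβx⟩ :=
    Weyl.exists_algHom (K := K) (c • wT K + (-a) • wX K) ((-d) • wT K + b • wX K)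
      (by linear_combination (norm := module) hcomm (-a) c b (-d) + hdet)
  refine ⟨Weyl.exists_algHom _ _ h, fun α hαt hαx => ?_⟩
  refine (AlgEquiv.ofAlgHom α β ?_ ?_).bijective <;> apply Weyl.algHom_ext <;>
    simp only [AlgHom.comp_apply, AlgHom.id_apply, hβt, hβx, map_add, map_smul, hαt, hαx]
  all_goals first
    | linear_combination (norm := module) hdet_smul (wT K)
    | linear_combination (norm := module) hdet_smul (wX K)

/-- Let `a, b, c, d ∈ K` and set `p := b·t + a·x`, `q := d·t + c·x`
in `A₁(K)`.  If `q·p = p·q + 1`, then there is a `K`-algebra endomorphism `α` of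
`A₁(K)` with `α(t) = p` and `α(x) = q`, and every such endomorphism is bijective. -/
theorem weyl_linear_endo_bijective (K : Type*) [Field K] [CharZero K] (a b c d : K)
    (h : (d • wT K + c • wX K) * (b • wT K + a • wX K) =
      (b • wT K + a • wX K) * (d • wT K + c • wX K) + 1) :
    (∃ α : Weyl K →ₐ[K] Weyl K,
      α (wT K) = b • wT K + a • wX K ∧ α (wX K) = d • wT K + c • wX K) ∧
    (∀ α : Weyl K →ₐ[K] Weyl K,
      α (wT K) = b • wT K + a • wX K → α (wX K) = d • wT K + c • wX K →
      Function.Bijective α) :=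
  weyl_linear_endo_bijective_general K a b c d h
end

section
/- Let n ≥ 3 be odd and consider 𝒞𝒮𝒟_n(K). Let M be the (n−1) × (n−1) skew-symmetric matrix over K defined by M_{ik} = −d_{ki} if k < i, M_{ii} = 0, and M_{ik} = d_{ik} if k > i (for 1 ≤ i, k ≤ n−1), and let b = (d_{1n}, …, d_{n−1,n}) ∈ K^{n−1}. Suppose a_1, …, a_{n−1} ∈ K are such that p_n := a_1·x_1 + ⋯ + a_{n−1}·x_{n−1} satisfies p_n·x_i − x_i·p_n = d_{in}·1 in 𝒞𝒮𝒟_n(K) for every 1 ≤ i ≤ n−1. If det M ≠ 0, then the vector (a_1, …, a_{n−1}) equals M^{-1}·b (so the coefficients a_k are uniquely determined by the constants d_{ij}), and the K-algebra endomorphism of 𝒞𝒮𝒟_n(K) sending x_i ↦ x_i for 1 ≤ i ≤ n−1 and x_n ↦ p_n (which exists since x_1, …, x_{n−1}, p_n satisfy the defining relations) is not surjective. -/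
/-- The generator `xᵢ` of `𝒞𝒮𝒟ₙ(K)`. -/
noncomputable def csdX (K : Type*) [Field K] {n : ℕ} (d : Fin n → Fin n → K)
    (i : Fin n) : CSD K d :=
  RingQuot.mkAlgHom K (csdRel K d) (FreeAlgebra.ι K i)

/-!
The commutator of `p = ∑ aₖ xₖ` with `xᵢ` is the scalar `∑ₖ Mᵢₖ aₖ`, and scalars embed into
`𝒞𝒮𝒟ₙ(K)`, so `M a = b`.

For non-surjectivity, let `𝒞𝒮𝒟ₙ(K)` act on `K[X₁, …, Xₙ]` by `xᵢ ↦ ∂ᵢ + ∑_{k > i} dᵢₖ Xₖ`.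
There, every `xᵢ` with `i ≠ l` commutes with multiplication by `Xₗ`, whereas `xₗ Xₗ - Xₗ xₗ = 1`;
hence `xₗ` is not in the subalgebra generated by the other generators. The endomorphism maps every
generator into the subalgebra generated by `x₁, …, x_{n-1}`, so its image misses `xₙ`.
-/

open MvPolynomial

namespace MvPolynomial

variable {R σ : Type*} [CommRing R]

theorem pderiv_pderiv_comm (i j : σ) (f : MvPolynomial σ R) :
    pderiv i (pderiv j f) = pderiv j (pderiv i f) := by
  classical
  have h : ⁅pderiv (R := R) i, pderiv j⁆ = 0 :=
    derivation_ext fun k => by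
      rw [Derivation.commutator_apply]
      simp [Pi.single_apply, apply_ite]
  rw [← sub_eq_zero, ← Derivation.commutator_apply, h, Derivation.zero_apply]

noncomputable def pderivAddMulLeft (i : σ) (P : MvPolynomial σ R) :
    Module.End R (MvPolynomial σ R) :=
  (pderiv i).toLinearMap + LinearMap.mulLeft R P

theorem pderivAddMulLeft_mul_mulLeft (i : σ) (P g : MvPolynomial σ R) :
    pderivAddMulLeft i P * LinearMap.mulLeft R g =
      LinearMap.mulLeft R g * pderivAddMulLeft i P + LinearMap.mulLeft R (pderiv i g) := by
  refine LinearMap.ext fun f => ?_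
  simp only [pderivAddMulLeft, Module.End.mul_apply, LinearMap.mulLeft_apply, LinearMap.add_apply,
    Derivation.coeFn_coe, Derivation.leibniz, smul_eq_mul]
  ring

theorem pderivAddMulLeft_mul_pderivAddMulLeft (i j : σ) (P Q : MvPolynomial σ R) :
    pderivAddMulLeft j P * pderivAddMulLeft i Q =
      pderivAddMulLeft i Q * pderivAddMulLeft j P +
        LinearMap.mulLeft R (pderiv j Q - pderiv i P) := by
  refine LinearMap.ext fun f => ?_
  simp only [pderivAddMulLeft, Module.End.mul_apply, LinearMap.add_apply, Derivation.coeFn_coe,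
    LinearMap.mulLeft_apply, map_add, pderiv_pderiv_comm j i, Derivation.leibniz, smul_eq_mul]
  ring

theorem mulLeft_C (r : R) :
    LinearMap.mulLeft R (C r : MvPolynomial σ R) = algebraMap R _ r := by
  refine LinearMap.ext fun f => ?_
  simp [C_mul']

end MvPolynomial

def skewOfUpper {ι α : Type*} [LinearOrder ι] [Neg α] [Zero α] (d : ι → ι → α) :
    Matrix ι ι α :=
  Matrix.of fun i k => if k < i then -d k i else if i < k then d i k else 0

namespace CSD

variable {K : Type*} [Field K] {n : ℕ} (d : Fin n → Fin n → K)

theorem csdX_mul_csdX_of_lt {i j : Fin n} (h : i < j) :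
    csdX K d j * csdX K d i = csdX K d i * csdX K d j + algebraMap K (CSD K d) (d i j) := by
  simpa only [map_mul, map_add, AlgHom.commutes, csdX] using
    RingQuot.mkAlgHom_rel K (s := csdRel K d) ⟨i, j, h, rfl, rfl⟩

theorem csdX_mul_csdX_sub (i k : Fin n) :
    csdX K d k * csdX K d i - csdX K d i * csdX K d k =
      algebraMap K (CSD K d) (skewOfUpper d i k) := by
  rcases lt_trichotomy i k with h | rfl | h
  · simp [skewOfUpper, h, not_lt_of_gt h, csdX_mul_csdX_of_lt d h]
  · simp [skewOfUpper]
  · simp [skewOfUpper, h, csdX_mul_csdX_of_lt d h]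

theorem sum_smul_csdX_mul_csdX_sub {ι : Type*} [Fintype ι] (a : ι → K) (e : ι → Fin n)
    (i : Fin n) :
    (∑ k, a k • csdX K d (e k)) * csdX K d i - csdX K d i * ∑ k, a k • csdX K d (e k) =
      algebraMap K (CSD K d) (∑ k, skewOfUpper d i (e k) * a k) := by
  rw [Finset.sum_mul, Finset.mul_sum, ← Finset.sum_sub_distrib, map_sum]
  refine Finset.sum_congr rfl fun k _ => ?_
  rw [smul_mul_assoc, mul_smul_comm, Algebra.smul_def, Algebra.smul_def, ← mul_sub,
    csdX_mul_csdX_sub, ← map_mul, mul_comm]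

variable {A : Type*} [Semiring A] [Algebra K A]

noncomputable def lift (f : Fin n → A)
    (hf : ∀ i j, i < j → f j * f i = f i * f j + algebraMap K A (d i j)) : CSD K d →ₐ[K] A :=
  RingQuot.liftAlgHom K ⟨FreeAlgebra.lift K f, by
    rintro _ _ ⟨i, j, hij, rfl, rfl⟩
    simpa only [map_mul, map_add, FreeAlgebra.lift_ι_apply, AlgHom.commutes] using hf i j hij⟩

@[simp]
theorem lift_csdX (f : Fin n → A)
    (hf : ∀ i j, i < j → f j * f i = f i * f j + algebraMap K A (d i j)) (i : Fin n) :
    lift d f hf (csdX K d i) = f i := by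
  rw [lift, csdX, RingQuot.liftAlgHom_mkAlgHom_apply, FreeAlgebra.lift_ι_apply]

theorem adjoin_range_csdX : Algebra.adjoin K (Set.range (csdX K d)) = ⊤ := by
  have h : Set.range (csdX K d) =
      RingQuot.mkAlgHom K (csdRel K d) '' Set.range (FreeAlgebra.ι K) :=
    Set.range_comp _ _
  rw [h, ← AlgHom.map_adjoin, FreeAlgebra.adjoin_range_ι,
    Algebra.map_top, AlgHom.range_eq_top]
  exact RingQuot.mkAlgHom_surjective K _

theorem range_le_of_csdX_mem (φ : CSD K d →ₐ[K] A) (S : Subalgebra K A)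
    (h : ∀ i, φ (csdX K d i) ∈ S) : φ.range ≤ S := by
  rw [← Algebra.map_top, ← adjoin_range_csdX, AlgHom.map_adjoin, Algebra.adjoin_le_iff,
    ← Set.range_comp]
  rintro _ ⟨i, rfl⟩
  exact h i

noncomputable def upperForm (i : Fin n) : MvPolynomial (Fin n) K :=
  ∑ k ∈ Finset.Ioi i, d i k • X k

theorem pderiv_upperForm (i j : Fin n) :
    pderiv j (upperForm d i) = if i < j then C (d i j) else 0 := by
  simp [upperForm, Pi.single_apply, smul_eq_C_mul]

noncomputable def rep : CSD K d →ₐ[K] Module.End K (MvPolynomial (Fin n) K) :=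
  lift d (fun i => pderivAddMulLeft i (upperForm d i)) fun i j hij => by
    rw [pderivAddMulLeft_mul_pderivAddMulLeft, pderiv_upperForm, pderiv_upperForm, if_pos hij,
      if_neg (asymm hij), sub_zero, mulLeft_C]

theorem rep_csdX (i : Fin n) : rep d (csdX K d i) = pderivAddMulLeft i (upperForm d i) :=
  lift_csdX _ _ _ i

instance : Nontrivial (CSD K d) :=
  (rep d).domain_nontrivial

theorem csdX_notMem_adjoin_image_compl (l : Fin n) :
    csdX K d l ∉ Algebra.adjoin K (csdX K d '' {l}ᶜ) := by
  let T := LinearMap.mulLeft K (X l : MvPolynomial (Fin n) K)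
  have hT (i : Fin n) :
      rep d (csdX K d i) * T = T * rep d (csdX K d i) + LinearMap.mulLeft K (pderiv i (X l)) := by
    rw [rep_csdX, pderivAddMulLeft_mul_mulLeft]
  have hle : Algebra.adjoin K (csdX K d '' {l}ᶜ) ≤
      (Subalgebra.centralizer K {T}).comap (rep d) := by
    rw [Algebra.adjoin_le_iff]
    rintro _ ⟨i, hi, rfl⟩
    rw [SetLike.mem_coe, Subalgebra.mem_comap, Subalgebra.mem_centralizer_iff]
    rintro _ rfl
    rw [hT, pderiv_X_of_ne (Ne.symm hi), LinearMap.mulLeft_zero_eq_zero, add_zero]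
  intro hl
  have hTl : rep d (csdX K d l) * T = T * rep d (csdX K d l) :=
    ((Subalgebra.mem_centralizer_iff K).1 (hle hl) T rfl).symm
  rw [hT, pderiv_X_self, LinearMap.mulLeft_one, add_eq_left,
    ← Module.End.one_eq_id] at hTl
  exact one_ne_zero hTl

end CSD

open CSD in
theorem exists_algHom_csdX_castSucc_last {K : Type*} [Field K] {m : ℕ}
    {d : Fin (m + 1) → Fin (m + 1) → K} (p : CSD K d)
    (hp : ∀ i : Fin m, p * csdX K d i.castSucc - csdX K d i.castSucc * p =
      algebraMap K (CSD K d) (d i.castSucc (Fin.last m))) :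
    ∃ φ : CSD K d →ₐ[K] CSD K d,
      (∀ i : Fin m, φ (csdX K d i.castSucc) = csdX K d i.castSucc) ∧
      φ (csdX K d (Fin.last m)) = p := by
  let f : Fin (m + 1) → CSD K d := Fin.lastCases p fun i => csdX K d i.castSucc
  have hf (i j : Fin (m + 1)) (hij : i < j) :
      f j * f i = f i * f j + algebraMap K (CSD K d) (d i j) := by
    induction j using Fin.lastCases with
    | last =>
      induction i using Fin.lastCases with
      | last => exact absurd hij (lt_irrefl _)
      | cast i =>
        simp only [f, Fin.lastCases_last, Fin.lastCases_castSucc]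
        rw [← sub_eq_iff_eq_add', hp i]
    | cast j =>
      induction i using Fin.lastCases with
      | last => exact absurd hij (not_lt.2 (Fin.le_last _))
      | cast i => simpa [f] using csdX_mul_csdX_of_lt d hij
  exact ⟨lift d f hf, fun i => by simp [f], by simp [f]⟩

open CSD in
theorem csd_odd_not_dixmier_general (K : Type*) [Field K]
    (m : ℕ)
    (d : Fin (m + 1) → Fin (m + 1) → K)
    (M : Matrix (Fin m) (Fin m) K)
    (hM : ∀ i k : Fin m, M i k =
      if k < i then -(d k.castSucc i.castSucc)
      else if i < k then d i.castSucc k.castSucc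
      else 0)
    (b : Fin m → K) (hb : ∀ i : Fin m, b i = d i.castSucc (Fin.last m))
    (a : Fin m → K)
    (hcomm : ∀ i : Fin m,
      (∑ k : Fin m, a k • csdX K d k.castSucc) * csdX K d i.castSucc -
        csdX K d i.castSucc * (∑ k : Fin m, a k • csdX K d k.castSucc) =
      algebraMap K (CSD K d) (d i.castSucc (Fin.last m)))
    (hdet : M.det ≠ 0) :
    a = M⁻¹.mulVec b ∧
    (∃ φ : CSD K d →ₐ[K] CSD K d,
      (∀ i : Fin m, φ (csdX K d i.castSucc) = csdX K d i.castSucc) ∧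
      φ (csdX K d (Fin.last m)) = ∑ k : Fin m, a k • csdX K d k.castSucc) ∧
    (∀ φ : CSD K d →ₐ[K] CSD K d,
      (∀ i : Fin m, φ (csdX K d i.castSucc) = csdX K d i.castSucc) →
      φ (csdX K d (Fin.last m)) = ∑ k : Fin m, a k • csdX K d k.castSucc →
      ¬ Function.Surjective φ) := by
  have hMa : M.mulVec a = b := by
    funext i
    apply (algebraMap K (CSD K d)).injective
    rw [hb, ← hcomm, sum_smul_csdX_mul_csdX_sub]
    simp [Matrix.mulVec, dotProduct, hM, skewOfUpper]
  refine ⟨?_, exists_algHom_csdX_castSucc_last _ hcomm, fun φ hfix hlast hsurj => ?_⟩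
  · rw [← hMa, Matrix.mulVec_mulVec, Matrix.nonsing_inv_mul M (isUnit_iff_ne_zero.2 hdet),
      Matrix.one_mulVec]
  set S := Algebra.adjoin K (csdX K d '' {Fin.last m}ᶜ)
  have hmem (i : Fin m) : csdX K d i.castSucc ∈ S :=
    Algebra.subset_adjoin ⟨_, Fin.castSucc_ne_last i, rfl⟩
  have hrange : φ.range ≤ S := by
    refine range_le_of_csdX_mem d φ S fun i => ?_
    induction i using Fin.lastCases with
    | last =>
      rw [hlast]
      exact Subalgebra.sum_mem _ fun k _ => Subalgebra.smul_mem _ (hmem k) _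
    | cast i => rw [hfix]; exact hmem i
  obtain ⟨u, hu⟩ := hsurj (csdX K d (Fin.last m))
  exact csdX_notMem_adjoin_image_compl d _ (hrange (hu ▸ φ.mem_range_self u))

/-- Let `n = m + 1 ≥ 3` be odd and consider `𝒞𝒮𝒟ₙ(K)`.  Let `M` be
the `(n−1) × (n−1)` skew-symmetric matrix with `M i k = −d k i` for `k < i`, `0` on the
diagonal and `d i k` for `i < k`, and let `b = (d₁ₙ, …, d_{n−1,n})`.  Suppose
`pₙ := a₁·x₁ + ⋯ + a_{n−1}·x_{n−1}` satisfies `pₙ·xᵢ − xᵢ·pₙ = d_{i,n}` for all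
`i ≤ n − 1`.  If `det M ≠ 0`, then `a = M⁻¹·b`, and the `K`-algebra endomorphism
sending `xᵢ ↦ xᵢ` (`i ≤ n−1`) and `xₙ ↦ pₙ` exists and is not surjective. -/
theorem csd_odd_not_dixmier (K : Type*) [Field K] [CharZero K]
    (m : ℕ) (hm : 2 ≤ m) (hodd : Odd (m + 1))
    (d : Fin (m + 1) → Fin (m + 1) → K)
    (hd : ∀ i j : Fin (m + 1), i < j → d i j ≠ 0)
    (M : Matrix (Fin m) (Fin m) K)
    (hM : ∀ i k : Fin m, M i k =
      if k < i then -(d k.castSucc i.castSucc)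
      else if i < k then d i.castSucc k.castSucc
      else 0)
    (b : Fin m → K) (hb : ∀ i : Fin m, b i = d i.castSucc (Fin.last m))
    (a : Fin m → K)
    (hcomm : ∀ i : Fin m,
      (∑ k : Fin m, a k • csdX K d k.castSucc) * csdX K d i.castSucc -
        csdX K d i.castSucc * (∑ k : Fin m, a k • csdX K d k.castSucc) =
      algebraMap K (CSD K d) (d i.castSucc (Fin.last m)))
    (hdet : M.det ≠ 0) :
    a = M⁻¹.mulVec b ∧
    (∃ φ : CSD K d →ₐ[K] CSD K d,
      (∀ i : Fin m, φ (csdX K d i.castSucc) = csdX K d i.castSucc) ∧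
      φ (csdX K d (Fin.last m)) = ∑ k : Fin m, a k • csdX K d k.castSucc) ∧
    (∀ φ : CSD K d →ₐ[K] CSD K d,
      (∀ i : Fin m, φ (csdX K d i.castSucc) = csdX K d i.castSucc) →
      φ (csdX K d (Fin.last m)) = ∑ k : Fin m, a k • csdX K d k.castSucc →
      ¬ Function.Surjective φ) :=
  csd_odd_not_dixmier_general K m d M hM b hb a hcomm hdet
end

section
/- Consider 𝒞𝒮𝒟_3(K) with constants d_{12}, d_{13}, d_{23} ∈ K \ {0}. If a_1, a_2 ∈ K are such that p_3 := a_1·x_1 + a_2·x_2 satisfies p_3·x_1 − x_1·p_3 = d_{13}·1 and p_3·x_2 − x_2·p_3 = d_{23}·1 in 𝒞𝒮𝒟_3(K), then a_1 = −d_{23}/d_{12} and a_2 = d_{13}/d_{12}; moreover, the K-algebra endomorphism of 𝒞𝒮𝒟_3(K) sending x_1 ↦ x_1, x_2 ↦ x_2 and x_3 ↦ −(d_{23}/d_{12})·x_1 + (d_{13}/d_{12})·x_2 exists and is not surjective. In particular, not every K-algebra endomorphism of 𝒞𝒮𝒟_3(K) is bijective, so 𝒞𝒮𝒟_3(K) is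 not a Dixmier algebra. -/
open Polynomial

section Lift

variable {K : Type*} [Field K] {n : ℕ} (d : Fin n → Fin n → K)

lemma csdX_lie {i j : Fin n} (h : i < j) :
    ⁅csdX K d j, csdX K d i⁆ = algebraMap K (CSD K d) (d i j) := by
  rw [Ring.lie_def, sub_eq_iff_eq_add']
  simpa [csdX] using RingQuot.mkAlgHom_rel K (s := csdRel K d) ⟨i, j, h, rfl, rfl⟩

lemma adjoin_range_csdX : Algebra.adjoin K (Set.range (csdX K d)) = ⊤ := by
  rw [show Set.range (csdX K d) = RingQuot.mkAlgHom K (csdRel K d) '' Set.range (FreeAlgebra.ι K)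
      by rw [← Set.range_comp]; rfl,
    ← AlgHom.map_adjoin, FreeAlgebra.adjoin_range_ι, Algebra.map_top,
    (AlgHom.range_eq_top _).2 (RingQuot.mkAlgHom_surjective K _)]

variable {d} {A : Type*} [Ring A] [Algebra K A]

noncomputable def csdLift (f : Fin n → A)
    (hf : ∀ i j, i < j → ⁅f j, f i⁆ = algebraMap K A (d i j)) : CSD K d →ₐ[K] A :=
  RingQuot.liftAlgHom K ⟨FreeAlgebra.lift K f, by
    rintro _ _ ⟨i, j, hij, rfl, rfl⟩
    simpa [Ring.lie_def, sub_eq_iff_eq_add'] using hf i j hij⟩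

@[simp]
lemma csdLift_csdX (f : Fin n → A) (hf : ∀ i j, i < j → ⁅f j, f i⁆ = algebraMap K A (d i j))
    (i : Fin n) : csdLift f hf (csdX K d i) = f i := by
  simp [csdLift, csdX]

lemma AlgHom.range_le_of_map_csdX_mem {S : Subalgebra K A} (φ : CSD K d →ₐ[K] A)
    (h : ∀ i, φ (csdX K d i) ∈ S) : φ.range ≤ S := by
  rw [← Algebra.map_top, ← adjoin_range_csdX, AlgHom.map_adjoin, Algebra.adjoin_le_iff]
  rintro _ ⟨_, ⟨i, rfl⟩, rfl⟩
  exact h i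

end Lift

section Bracket

variable {K A : Type*} [CommRing K] [Ring A] [Algebra K A] {x y : A} {t : K}

lemma lie_smul_add_smul_left (h : ⁅y, x⁆ = algebraMap K A t) (a b : K) :
    ⁅a • x + b • y, x⁆ = algebraMap K A (b * t) := by
  rw [map_mul, ← Algebra.smul_def, ← h]
  simp only [Ring.lie_def, add_mul, mul_add, smul_mul_assoc, mul_smul_comm]
  module

lemma lie_smul_add_smul_right (h : ⁅y, x⁆ = algebraMap K A t) (a b : K) :
    ⁅a • x + b • y, y⁆ = algebraMap K A (-(a * t)) := by
  rw [map_neg, map_mul, ← Algebra.smul_def, ← h]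
  simp only [Ring.lie_def, add_mul, mul_add, smul_mul_assoc, mul_smul_comm]
  module

end Bracket

lemma smul_derivative_lie_mulLeft_X {K : Type*} [CommRing K] (c : K) :
    ⁅c • (derivative : Module.End K K[X]), LinearMap.mulLeft K (X : K[X])⁆ =
      algebraMap K (Module.End K K[X]) c := by
  refine LinearMap.ext fun p => ?_
  simp [Ring.lie_def, derivative_mul, Algebra.algebraMap_eq_smul_one]

lemma lie_C_smul_derivative_C_mulLeft_X {K : Type*} [CommRing K] (c : K) :
    ⁅C (c • derivative : Module.End K K[X]), C (LinearMap.mulLeft K (X : K[X]))⁆ =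
      algebraMap K (Module.End K K[X])[X] c := by
  rw [Ring.lie_def, ← C_mul, ← C_mul, ← C_sub, ← Ring.lie_def, smul_derivative_lie_mulLeft_X,
    Polynomial.algebraMap_apply]

lemma forall_lt_fin_three {P : Fin 3 → Fin 3 → Prop} (h01 : P 0 1) (h02 : P 0 2) (h12 : P 1 2) :
    ∀ i j : Fin 3, i < j → P i j := by
  intro i j hij
  fin_cases i <;> fin_cases j <;> first | assumption | exact absurd hij (by decide)

section CSD3

variable {K : Type*} [Field K] {d : Fin 3 → Fin 3 → K}

def csd3Gen {A : Type*} [Ring A] [Algebra K A] (d : Fin 3 → Fin 3 → K) (y0 y1 z : A) :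
    Fin 3 → A :=
  ![y0, y1, (-(d 1 2 / d 0 1)) • y0 + (d 0 2 / d 0 1) • y1 + z]

lemma lie_csd3Gen {A : Type*} [Ring A] [Algebra K A] (h01 : d 0 1 ≠ 0) {y0 y1 z : A}
    (hy : ⁅y1, y0⁆ = algebraMap K A (d 0 1)) (hz0 : Commute z y0) (hz1 : Commute z y1) :
    ∀ i j, i < j → ⁅csd3Gen d y0 y1 z j, csd3Gen d y0 y1 z i⁆ = algebraMap K A (d i j) := by
  apply forall_lt_fin_three
  · exact hy
  · change ⁅(-(d 1 2 / d 0 1)) • y0 + (d 0 2 / d 0 1) • y1 + z, y0⁆ = _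
    rw [Ring.lie_def, add_mul, mul_add, hz0.eq, add_sub_add_right_eq_sub, ← Ring.lie_def,
      lie_smul_add_smul_left hy, div_mul_cancel₀ _ h01]
  · change ⁅(-(d 1 2 / d 0 1)) • y0 + (d 0 2 / d 0 1) • y1 + z, y1⁆ = _
    rw [Ring.lie_def, add_mul, mul_add, hz1.eq, add_sub_add_right_eq_sub, ← Ring.lie_def,
      lie_smul_add_smul_right hy, neg_mul, neg_neg, div_mul_cancel₀ _ h01]

lemma csd3_exists_endomorphism (h01 : d 0 1 ≠ 0) :
    ∃ φ : CSD K d →ₐ[K] CSD K d,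
      φ (csdX K d 0) = csdX K d 0 ∧ φ (csdX K d 1) = csdX K d 1 ∧
      φ (csdX K d 2) = (-(d 1 2 / d 0 1)) • csdX K d 0 + (d 0 2 / d 0 1) • csdX K d 1 := by
  let φ := csdLift (csd3Gen d (csdX K d 0) (csdX K d 1) 0)
    (lie_csd3Gen h01 (csdX_lie d (by decide)) (Commute.zero_left _) (Commute.zero_left _))
  exact ⟨φ, csdLift_csdX _ _ 0, csdLift_csdX _ _ 1, (csdLift_csdX _ _ 2).trans (add_zero _)⟩

noncomputable def csd3WeylRep (h01 : d 0 1 ≠ 0) : CSD K d →ₐ[K] (Module.End K K[X])[X] :=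
  csdLift (csd3Gen d (C (LinearMap.mulLeft K (X : K[X]))) (C (d 0 1 • derivative)) X)
    (lie_csd3Gen h01 (lie_C_smul_derivative_C_mulLeft_X (d 0 1)) (commute_X _) (commute_X _))

lemma csd3_nontrivial (h01 : d 0 1 ≠ 0) : Nontrivial (CSD K d) :=
  (csd3WeylRep h01).toRingHom.domain_nontrivial

lemma csdX_two_notMem_adjoin (h01 : d 0 1 ≠ 0) :
    csdX K d 2 ∉ Algebra.adjoin K {csdX K d 0, csdX K d 1} := by
  set Ψ := csd3WeylRep (d := d) h01
  have hΨ (i : Fin 3) : Ψ (csdX K d i) = csd3Gen d _ _ X i := csdLift_csdX _ _ i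
  intro hmem
  have hconst : Ψ (csdX K d 2) ∈ (CAlgHom : Module.End K K[X] →ₐ[K] _).range := by
    have : Ψ (csdX K d 2) ∈ (Algebra.adjoin K _).map Ψ := Subalgebra.mem_map.2 ⟨_, hmem, rfl⟩
    rw [AlgHom.map_adjoin, Set.image_pair, hΨ, hΨ] at this
    refine Algebra.adjoin_le ?_ this
    exact Set.pair_subset_iff.2 ⟨⟨_, rfl⟩, ⟨_, rfl⟩⟩
  obtain ⟨a, ha⟩ := hconst
  have hcoeff := congrArg (coeff · 1) ha
  simp [hΨ, csd3Gen] at hcoeff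

lemma csd3_not_surjective_of_map_csdX (h01 : d 0 1 ≠ 0) (φ : CSD K d →ₐ[K] CSD K d)
    (h0 : φ (csdX K d 0) = csdX K d 0) (h1 : φ (csdX K d 1) = csdX K d 1)
    (h2 : φ (csdX K d 2) = (-(d 1 2 / d 0 1)) • csdX K d 0 + (d 0 2 / d 0 1) • csdX K d 1) :
    ¬ Function.Surjective φ := by
  set S := Algebra.adjoin K {csdX K d 0, csdX K d 1}
  have hx0 : csdX K d 0 ∈ S := Algebra.subset_adjoin (Set.mem_insert _ _)
  have hx1 : csdX K d 1 ∈ S := Algebra.subset_adjoin (Set.mem_insert_of_mem _ rfl)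
  have hrange : φ.range ≤ S := φ.range_le_of_map_csdX_mem fun i => by
    fin_cases i
    · simpa [h0] using hx0
    · simpa [h1] using hx1
    · simpa [h2] using add_mem (S.smul_mem hx0 _) (S.smul_mem hx1 _)
  exact fun hφ =>
    csdX_two_notMem_adjoin h01 (hrange ((AlgHom.range_eq_top φ).2 hφ ▸ Algebra.mem_top))

end CSD3

theorem csd3_not_dixmier_general (K : Type*) [Field K]
    (d : Fin 3 → Fin 3 → K) (hd : ∀ i j : Fin 3, i < j → d i j ≠ 0)
    (a1 a2 : K)
    (hc1 : (a1 • csdX K d 0 + a2 • csdX K d 1) * csdX K d 0 -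
        csdX K d 0 * (a1 • csdX K d 0 + a2 • csdX K d 1) =
      algebraMap K (CSD K d) (d 0 2))
    (hc2 : (a1 • csdX K d 0 + a2 • csdX K d 1) * csdX K d 1 -
        csdX K d 1 * (a1 • csdX K d 0 + a2 • csdX K d 1) =
      algebraMap K (CSD K d) (d 1 2)) :
    a1 = -(d 1 2) / d 0 1 ∧ a2 = d 0 2 / d 0 1 ∧
    (∃ φ : CSD K d →ₐ[K] CSD K d,
      φ (csdX K d 0) = csdX K d 0 ∧ φ (csdX K d 1) = csdX K d 1 ∧
      φ (csdX K d 2) = (-(d 1 2 / d 0 1)) • csdX K d 0 + (d 0 2 / d 0 1) • csdX K d 1) ∧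
    (∀ φ : CSD K d →ₐ[K] CSD K d,
      φ (csdX K d 0) = csdX K d 0 → φ (csdX K d 1) = csdX K d 1 →
      φ (csdX K d 2) = (-(d 1 2 / d 0 1)) • csdX K d 0 + (d 0 2 / d 0 1) • csdX K d 1 →
      ¬ Function.Surjective φ) ∧
    ¬ (∀ φ : CSD K d →ₐ[K] CSD K d, Function.Bijective φ) := by
  have h01 : d 0 1 ≠ 0 := hd 0 1 (by decide)
  have hx := csdX_lie d (show (0 : Fin 3) < 1 by decide)
  have : Nontrivial (CSD K d) := csd3_nontrivial h01
  rw [← Ring.lie_def, lie_smul_add_smul_left hx, (algebraMap K _).injective.eq_iff] at hc1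
  rw [← Ring.lie_def, lie_smul_add_smul_right hx, (algebraMap K _).injective.eq_iff] at hc2
  obtain ⟨φ, h0, h1, h2⟩ := csd3_exists_endomorphism h01
  exact ⟨by rw [eq_div_iff h01]; linear_combination -hc2, by rw [eq_div_iff h01]; exact hc1,
    ⟨φ, h0, h1, h2⟩, csd3_not_surjective_of_map_csdX h01,
    fun h => csd3_not_surjective_of_map_csdX h01 φ h0 h1 h2 (h φ).2⟩

/-- Consider `𝒞𝒮𝒟₃(K)` with generators `x₁ = x 0`, `x₂ = x 1`,
`x₃ = x 2` and constants `d₁₂ = d 0 1`, `d₁₃ = d 0 2`, `d₂₃ = d 1 2`.  If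
`p₃ := a₁·x₁ + a₂·x₂` satisfies `p₃·x₁ − x₁·p₃ = d₁₃` and `p₃·x₂ − x₂·p₃ = d₂₃`, then
`a₁ = −d₂₃/d₁₂` and `a₂ = d₁₃/d₁₂`; moreover the endomorphism sending `x₁ ↦ x₁`,
`x₂ ↦ x₂`, `x₃ ↦ −(d₂₃/d₁₂)·x₁ + (d₁₃/d₁₂)·x₂` exists and is not surjective.  In
particular `𝒞𝒮𝒟₃(K)` is not a Dixmier algebra. -/
theorem csd3_not_dixmier (K : Type*) [Field K] [CharZero K]
    (d : Fin 3 → Fin 3 → K) (hd : ∀ i j : Fin 3, i < j → d i j ≠ 0)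
    (a1 a2 : K)
    (hc1 : (a1 • csdX K d 0 + a2 • csdX K d 1) * csdX K d 0 -
        csdX K d 0 * (a1 • csdX K d 0 + a2 • csdX K d 1) =
      algebraMap K (CSD K d) (d 0 2))
    (hc2 : (a1 • csdX K d 0 + a2 • csdX K d 1) * csdX K d 1 -
        csdX K d 1 * (a1 • csdX K d 0 + a2 • csdX K d 1) =
      algebraMap K (CSD K d) (d 1 2)) :
    a1 = -(d 1 2) / d 0 1 ∧ a2 = d 0 2 / d 0 1 ∧
    (∃ φ : CSD K d →ₐ[K] CSD K d,
      φ (csdX K d 0) = csdX K d 0 ∧ φ (csdX K d 1) = csdX K d 1 ∧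
      φ (csdX K d 2) = (-(d 1 2 / d 0 1)) • csdX K d 0 + (d 0 2 / d 0 1) • csdX K d 1) ∧
    (∀ φ : CSD K d →ₐ[K] CSD K d,
      φ (csdX K d 0) = csdX K d 0 → φ (csdX K d 1) = csdX K d 1 →
      φ (csdX K d 2) = (-(d 1 2 / d 0 1)) • csdX K d 0 + (d 0 2 / d 0 1) • csdX K d 1 →
      ¬ Function.Surjective φ) ∧
    ¬ (∀ φ : CSD K d →ₐ[K] CSD K d, Function.Bijective φ) :=
  csd3_not_dixmier_general K d hd a1 a2 hc1 hc2
end
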